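/- arXiv:2501.08529 — 6 statements merged into one kernel-verified Lean document; each statement's English description precedes it below -/
import Mathlib

section
/- Let L1 and L2 be finite groups and let (G, p1, p2) be a witness system for the compatibility of (L1, L2) such that |G| is minimal among all witness systems for (L1, L2). Let N1 = ker(p1) and N2 = ker(p2). If F is a characteristic functor such that F(N1) = F(N2) (as subgroups of G), then F(N1) is the trivial subgroup. -/
/-- `(G, p1, p2)` is a witness system for the compatibility of `(L1, L2)`:
`p1 : G → L1` and `p2 : G → L2` are surjective with isomorphic kernels. -/
structure IsWitnessSystem (L1 : Type) [Group L1] (L2 : Type) [Group L2]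
    (G : Type) [Group G] (p1 : G →* L1) (p2 : G →* L2) : Prop where
  surjective_fst : Function.Surjective p1
  surjective_snd : Function.Surjective p2
  ker_iso : Nonempty (↥p1.ker ≃* ↥p2.ker)

/-- A witness system whose group `G` has minimal order among all witness systems
for the compatibility of `(L1, L2)`. -/
def IsMinimalWitnessSystem (L1 : Type) [Group L1] (L2 : Type) [Group L2]
    (G : Type) [Group G] [Finite G] (p1 : G →* L1) (p2 : G →* L2) : Prop :=
  IsWitnessSystem L1 L2 G p1 p2 ∧
    ∀ (G' : Type) (_ : Group G') (_ : Finite G') (q1 : G' →* L1) (q2 : G' →* L2),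
      IsWitnessSystem L1 L2 G' q1 q2 → Nat.card G ≤ Nat.card G'

/-- A characteristic functor: an assignment of a subgroup `F(X) ≤ X` to each finite
group `X`, such that `σ(F(X)) = F(Y)` for every isomorphism `σ : X → Y`. -/
structure CharacteristicFunctor : Type 1 where
  F : ∀ (X : Type) [Group X] [Finite X], Subgroup X
  map_iso : ∀ (X : Type) [Group X] [Finite X] (Y : Type) [Group Y] [Finite Y]
    (σ : X ≃* Y), (F X).map σ.toMonoidHom = F Y

/-- The value of a characteristic functor is a normal subgroup. -/
lemma charFunctor_normal (F : CharacteristicFunctor) (X : Type) [Group X] [Finite X] :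
    (F.F X).Normal := by
  constructor
  intro n hn g
  have h := F.map_iso X X (MulAut.conj g)
  rw [← h]
  exact ⟨n, hn, rfl⟩

set_option maxHeartbeats 1600000 in
/-- Lemma 3.4(i): in a minimal witness system, a characteristic functor that agrees
on the two kernels must be trivial on them. -/
theorem char_functor_trivial_of_minimal_witness
    (L1 : Type) [Group L1] [Finite L1] (L2 : Type) [Group L2] [Finite L2]
    (G : Type) [Group G] [Finite G] (p1 : G →* L1) (p2 : G →* L2)
    (hmin : IsMinimalWitnessSystem L1 L2 G p1 p2)
    (F : CharacteristicFunctor)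
    (hF : (F.F ↥p1.ker).map p1.ker.subtype = (F.F ↥p2.ker).map p2.ker.subtype) :
    F.F ↥p1.ker = ⊥ := by
  classical
  set M : Subgroup G := (F.F ↥p1.ker).map p1.ker.subtype with hMdef
  have hM1 : M ≤ p1.ker := Subgroup.map_subtype_le _
  have hM2 : M ≤ p2.ker := by rw [hF]; exact Subgroup.map_subtype_le _
  haveI : M.Normal := by
    constructor
    intro n hn g
    obtain ⟨x, hx, rfl⟩ := hn
    have h := F.map_iso ↥p1.ker ↥p1.ker (MulAut.conjNormal g)
    have hx' : (MulAut.conjNormal g x) ∈ F.F ↥p1.ker := by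
      rw [← h]; exact ⟨x, hx, rfl⟩
    exact ⟨MulAut.conjNormal g x, hx', (MulAut.conjNormal_apply g x).symm⟩
  haveI n1 : (F.F ↥p1.ker).Normal := charFunctor_normal F _
  haveI n2 : (F.F ↥p2.ker).Normal := charFunctor_normal F _
  -- the kernel of the induced map on `G ⧸ M` is isomorphic to `p.ker ⧸ F(p.ker)`
  have kerlem : ∀ (L : Type) (_ : Group L) (p : G →* L) (hM : M ≤ p.ker)
      (K : Subgroup ↥p.ker) (_ : K.Normal) (hK : K.map p.ker.subtype = M),
      Nonempty (↥(QuotientGroup.lift M p (fun x hx => hM hx)).ker ≃* (↥p.ker ⧸ K)) := by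
    intro L _ p hM K _ hK
    set f : ↥p.ker →* G ⧸ M := (QuotientGroup.mk' M).comp p.ker.subtype with hf
    have hker : f.ker = K := by
      ext x
      simp only [hf, MonoidHom.mem_ker, MonoidHom.comp_apply, QuotientGroup.mk'_apply]
      rw [QuotientGroup.eq_one_iff]
      constructor
      · intro hx
        have hc := Subgroup.comap_map_eq_self_of_injective p.ker.subtype_injective K
        rw [← hc, Subgroup.mem_comap, hK]
        exact hx
      · intro hx
        rw [← hK]
        exact ⟨x, hx, rfl⟩
    have hrange : f.range = (QuotientGroup.lift M p (fun x hx => hM hx)).ker := by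
      ext y
      constructor
      · rintro ⟨x, rfl⟩
        simp only [hf, MonoidHom.mem_ker, MonoidHom.comp_apply, QuotientGroup.mk'_apply,
          QuotientGroup.lift_mk]
        exact x.2
      · intro hy
        obtain ⟨g, rfl⟩ := QuotientGroup.mk'_surjective M y
        have hg : g ∈ p.ker := by
          simpa [MonoidHom.mem_ker] using hy
        exact ⟨⟨g, hg⟩, rfl⟩
    exact ⟨((MulEquiv.subgroupCongr hrange).symm.trans
      (QuotientGroup.quotientKerEquivRange f).symm).trans
      (QuotientGroup.quotientMulEquivOfEq hker)⟩
  obtain ⟨e1⟩ := kerlem L1 inferInstance p1 hM1 (F.F ↥p1.ker) n1 hMdef.symm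
  obtain ⟨e2⟩ := kerlem L2 inferInstance p2 hM2 (F.F ↥p2.ker) n2 hF.symm
  obtain ⟨σ⟩ := hmin.1.ker_iso
  have hcross : (↥p1.ker ⧸ F.F ↥p1.ker) ≃* (↥p2.ker ⧸ F.F ↥p2.ker) :=
    QuotientGroup.congr _ _ σ (F.map_iso _ _ σ)
  have hws : IsWitnessSystem L1 L2 (G ⧸ M)
      (QuotientGroup.lift M p1 (fun x hx => hM1 hx))
      (QuotientGroup.lift M p2 (fun x hx => hM2 hx)) := by
    refine ⟨?_, ?_, ⟨(e1.trans hcross).trans e2.symm⟩⟩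
    · intro l
      obtain ⟨g, hg⟩ := hmin.1.surjective_fst l
      exact ⟨QuotientGroup.mk g, by simpa using hg⟩
    · intro l
      obtain ⟨g, hg⟩ := hmin.1.surjective_snd l
      exact ⟨QuotientGroup.mk g, by simpa using hg⟩
  have hle := hmin.2 (G ⧸ M) inferInstance inferInstance _ _ hws
  have hcard := Subgroup.card_eq_card_quotient_mul_card_subgroup M
  have hMpos : 0 < Nat.card ↥M := Nat.card_pos
  have hQpos : 0 < Nat.card (G ⧸ M) := Nat.card_pos
  have hM1' : Nat.card ↥M = 1 := by nlinarith
  have hMbot : M = ⊥ := Subgroup.card_eq_one.mp hM1'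
  have hle' : F.F ↥p1.ker ≤ (⊥ : Subgroup ↥p1.ker) := by
    intro x hx
    have hxM : (x : G) ∈ M := ⟨x, hx, rfl⟩
    rw [hMbot, Subgroup.mem_bot] at hxM
    simpa [Subgroup.mem_bot] using Subtype.ext hxM
  exact le_antisymm hle' bot_le
end

section
/- Let K be a Melnikov formation, let L1 and L2 be finite groups, and let (G, p1, p2) be a witness system for the compatibility of (L1, L2) such that |G| is minimal among all witness systems for (L1, L2). Let N1 = ker(p1) and N2 = ker(p2). If p2(N1) ∈ K or p1(N2) ∈ K, then N1 ∈ K and N2 ∈ K. -/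
/-- A Melnikov formation: a class of finite groups containing the trivial group,
closed under isomorphism, normal subgroups, quotients and extensions. -/
structure MelnikovFormation : Type 1 where
  mem : ∀ (G : Type) [Group G] [Finite G], Prop
  mem_of_subsingleton : ∀ (G : Type) [Group G] [Finite G], Subsingleton G → mem G
  mem_of_iso : ∀ (G : Type) [Group G] [Finite G] (H : Type) [Group H] [Finite H],
    (G ≃* H) → mem G → mem H
  mem_of_normal : ∀ (G : Type) [Group G] [Finite G] (N : Subgroup G), N.Normal →
    mem G → mem ↥N
  mem_quotient : ∀ (G : Type) [Group G] [Finite G] (N : Subgroup G) [N.Normal],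
    mem G → mem (G ⧸ N)
  mem_of_extension : ∀ (G : Type) [Group G] [Finite G] (N : Subgroup G) [N.Normal],
    mem ↥N → mem (G ⧸ N) → mem G

/-- `K.memQuot G N h` says that the quotient `G ⧸ N` belongs to the class `K`. -/
def MelnikovFormation.memQuot (K : MelnikovFormation) (G : Type) [Group G] [Finite G]
    (N : Subgroup G) (h : N.Normal) : Prop :=
  letI := h
  K.mem (G ⧸ N)

/-- The `K`-residue `O^K(G)`: the intersection of all normal subgroups `A ⊴ G` with `G ⧸ A ∈ K`. -/
def Kresidue (K : MelnikovFormation) (G : Type) [Group G] [Finite G] : Subgroup G :=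
  sInf {A : Subgroup G | ∃ h : A.Normal, K.memQuot G A h}

/-- The `K`-radical `O_K(G)`: the subgroup generated by all normal subgroups `A ⊴ G` with `A ∈ K`. -/
def Kradical (K : MelnikovFormation) (G : Type) [Group G] [Finite G] : Subgroup G :=
  sSup {A : Subgroup G | A.Normal ∧ K.mem ↥A}

lemma Kres_normal (K : MelnikovFormation) (A : Type) [Group A] [Finite A] :
    (Kresidue K A).Normal := by
  constructor
  intro n hn g
  rw [Kresidue, Subgroup.mem_sInf] at hn ⊢
  intro S hS
  obtain ⟨hnorm, hq⟩ := hS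
  exact hnorm.conj_mem n (hn S ⟨hnorm, hq⟩) g

lemma Kres_set_inter (K : MelnikovFormation) (A : Type) [Group A] [Finite A]
    (NA NB : Subgroup A) [hNA : NA.Normal] [hNB : NB.Normal]
    (hA : K.mem (A ⧸ NA)) (hB : K.mem (A ⧸ NB)) : K.mem (A ⧸ (NA ⊓ NB)) := by
  set J : Subgroup A := NA ⊓ NB with hJ
  have hJn : J.Normal := inferInstance
  set f : ↥NA →* A ⧸ NB := (QuotientGroup.mk' NB).comp NA.subtype with hf
  set f' : ↥NA →* A ⧸ J := (QuotientGroup.mk' J).comp NA.subtype with hf'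
  have hker : f.ker = f'.ker := by
    ext x
    simp only [hf, hf', MonoidHom.mem_ker, MonoidHom.comp_apply, Subgroup.coe_subtype,
      QuotientGroup.mk'_apply, QuotientGroup.eq_one_iff]
    constructor
    · intro h; exact ⟨x.2, h⟩
    · intro h; exact h.2
  have hrange' : f'.range = Subgroup.map (QuotientGroup.mk' J) NA := by
    rw [hf', MonoidHom.range_comp, Subgroup.range_subtype]
  have hrn : f.range.Normal := by
    rw [hf, MonoidHom.range_comp, Subgroup.range_subtype]
    exact hNA.map _ (QuotientGroup.mk'_surjective NB)
  have h1 : K.mem ↥f.range := by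
    refine K.mem_of_normal _ _ hrn hB
  have h2 : K.mem (↥NA ⧸ f.ker) :=
    K.mem_of_iso _ _ (QuotientGroup.quotientKerEquivRange f).symm h1
  have h2' : K.mem (↥NA ⧸ f'.ker) :=
    K.mem_of_iso _ _ (QuotientGroup.quotientMulEquivOfEq hker) h2
  have h3 : K.mem ↥f'.range :=
    K.mem_of_iso _ _ (QuotientGroup.quotientKerEquivRange f') h2'
  rw [hrange'] at h3
  haveI : (Subgroup.map (QuotientGroup.mk' J) NA).Normal :=
    hNA.map _ (QuotientGroup.mk'_surjective J)
  refine K.mem_of_extension _ (Subgroup.map (QuotientGroup.mk' J) NA) h3 ?_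
  exact K.mem_of_iso _ _
    (QuotientGroup.quotientQuotientEquivQuotient J NA inf_le_left).symm hA

lemma Kres_quot_mem (K : MelnikovFormation) (A : Type) [Group A] [Finite A]
    [hres : (Kresidue K A).Normal] : K.mem (A ⧸ Kresidue K A) := by
  classical
  set T : Set (Subgroup A) := {S : Subgroup A | ∃ h : S.Normal, K.memQuot A S h} with hT
  have hne : T.Nonempty := by
    refine ⟨⊤, inferInstance, ?_⟩
    exact K.mem_of_subsingleton _ (QuotientGroup.subsingleton_quotient_top)
  obtain ⟨B, hB, hBmin⟩ := Set.exists_min_image T (fun S => Nat.card ↥S) (Set.toFinite T) hne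
  obtain ⟨hBn, hBq⟩ := hB
  have hBle : ∀ S ∈ T, B ≤ S := by
    intro S hS
    obtain ⟨hSn, hSq⟩ := hS
    haveI := hSn; haveI := hBn
    have hmem : B ⊓ S ∈ T := ⟨inferInstance, Kres_set_inter K A B S hBq hSq⟩
    have hcard := hBmin _ hmem
    have : B ⊓ S = B := Subgroup.eq_of_le_of_card_ge inf_le_left (by simpa using hcard)
    rw [← this]; exact inf_le_right
  have hresB : Kresidue K A = B := le_antisymm (sInf_le ⟨hBn, hBq⟩) (le_sInf hBle)
  haveI := hBn
  exact K.mem_of_iso _ _ (QuotientGroup.quotientMulEquivOfEq hresB).symm hBq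

-- equivariance of the residue
lemma Kres_le_map (K : MelnikovFormation) (A : Type) [Group A] [Finite A]
    (B : Type) [Group B] [Finite B] (e : A ≃* B) :
    Kresidue K B ≤ (Kresidue K A).map e.toMonoidHom := by
  haveI hA := Kres_normal K A
  have hn : ((Kresidue K A).map e.toMonoidHom).Normal := hA.map _ e.surjective
  refine sInf_le ⟨hn, ?_⟩
  have eq : A ⧸ Kresidue K A ≃* B ⧸ (Kresidue K A).map e.toMonoidHom :=
    QuotientGroup.congr _ _ e rfl
  exact K.mem_of_iso _ _ eq (Kres_quot_mem K A)

lemma Kres_map (K : MelnikovFormation) (A : Type) [Group A] [Finite A]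
    (B : Type) [Group B] [Finite B] (e : A ≃* B) :
    (Kresidue K A).map e.toMonoidHom = Kresidue K B := by
  refine le_antisymm ?_ (Kres_le_map K A B e)
  have h2 := Kres_le_map K B A e.symm
  have h3 := Subgroup.map_mono (f := e.toMonoidHom) h2
  rw [Subgroup.map_map] at h3
  have h4 : (e.toMonoidHom.comp e.symm.toMonoidHom) = MonoidHom.id B := by
    ext x; simp
  rw [h4, Subgroup.map_id] at h3
  exact h3

-- conjugation as an automorphism of a normal subgroup
def conjEquiv {A : Type} [Group A] {H : Subgroup A} (hH : H.Normal) (g : A) :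
    ↥H ≃* ↥H where
  toFun x := ⟨g * x * g⁻¹, hH.conj_mem x.1 x.2 g⟩
  invFun x := ⟨g⁻¹ * x * g, by simpa using hH.conj_mem x.1 x.2 g⁻¹⟩
  left_inv x := by ext; simp [mul_assoc]
  right_inv x := by ext; simp [mul_assoc]
  map_mul' x y := by ext; simp

-- image under subtype of an "equivariant" subgroup is normal
lemma map_subtype_normal {A : Type} [Group A] {H : Subgroup A} (hH : H.Normal)
    (S : Subgroup ↥H) (hchar : ∀ e : ↥H ≃* ↥H, S.map e.toMonoidHom = S) :
    (S.map H.subtype).Normal := by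
  constructor
  intro n hn g
  obtain ⟨x, hx, rfl⟩ := hn
  have hx' : conjEquiv hH g x ∈ S := by
    rw [← hchar (conjEquiv hH g)]
    exact ⟨x, hx, rfl⟩
  exact ⟨conjEquiv hH g x, hx', rfl⟩

lemma KresG_normal (K : MelnikovFormation) {A : Type} [Group A] [Finite A]
    {H : Subgroup A} (hH : H.Normal) : ((Kresidue K ↥H).map H.subtype).Normal :=
  map_subtype_normal hH _ (fun e => Kres_map K ↥H ↥H e)

-- the residue is K-perfect
lemma Kres_perfect (K : MelnikovFormation) (A : Type) [Group A] [Finite A] :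
    Kresidue K ↥(Kresidue K A) = ⊤ := by
  haveI hSn : (Kresidue K A).Normal := Kres_normal K A
  set S : Subgroup A := Kresidue K A with hS
  haveI hWn : (Kresidue K ↥S).Normal := Kres_normal K ↥S
  set W : Subgroup ↥S := Kresidue K ↥S with hW
  set W' : Subgroup A := W.map S.subtype with hW'
  haveI hW'n : W'.Normal := KresG_normal K hSn
  have hW'S : W' ≤ S := Subgroup.map_subtype_le W
  have hQ : K.mem (A ⧸ W') := by
    set SQ : Subgroup (A ⧸ W') := S.map (QuotientGroup.mk' W') with hSQ
    haveI hSQn : SQ.Normal := hSn.map _ (QuotientGroup.mk'_surjective W')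
    set f : ↥S →* A ⧸ W' := (QuotientGroup.mk' W').comp S.subtype with hf
    have hkerf : f.ker = W := by
      ext x
      simp only [hf, MonoidHom.mem_ker, MonoidHom.comp_apply, Subgroup.coe_subtype,
        QuotientGroup.mk'_apply, QuotientGroup.eq_one_iff]
      constructor
      · rintro ⟨y, hy, hxy⟩
        have : y = x := Subtype.ext hxy
        rwa [← this]
      · intro hx; exact ⟨x, hx, rfl⟩
    have hrangef : f.range = SQ := by
      rw [hf, MonoidHom.range_comp, Subgroup.range_subtype, hSQ]
    have h1 : K.mem (↥S ⧸ f.ker) :=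
      K.mem_of_iso _ _ (QuotientGroup.quotientMulEquivOfEq hkerf.symm)
        (Kres_quot_mem K ↥S)
    have h2 : K.mem ↥SQ := by
      rw [← hrangef]
      exact K.mem_of_iso _ _ (QuotientGroup.quotientKerEquivRange f) h1
    have h3 : K.mem ((A ⧸ W') ⧸ SQ) :=
      K.mem_of_iso _ _ (QuotientGroup.quotientQuotientEquivQuotient W' S hW'S).symm
        (Kres_quot_mem K A)
    exact K.mem_of_extension _ SQ h2 h3
  have hle : S ≤ W' := by
    rw [hS]
    exact sInf_le ⟨hW'n, hQ⟩
  rw [eq_top_iff]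
  intro x _
  have hx : (x : A) ∈ W' := hle x.2
  obtain ⟨y, hy, hxy⟩ := hx
  have : y = x := Subtype.ext hxy
  rwa [← this]

-- the "quotient of kernel by a central normal M" equiv
lemma ker_lift_eq {G : Type} [Group G] {L : Type} [Group L] (p : G →* L)
    (M : Subgroup G) [M.Normal] (hM : M ≤ p.ker) :
    (QuotientGroup.lift M p hM).ker = p.ker.map (QuotientGroup.mk' M) := by
  ext x
  refine QuotientGroup.induction_on x ?_
  intro z
  simp only [MonoidHom.mem_ker]
  constructor
  · intro hz
    rw [QuotientGroup.lift_mk] at hz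
    exact ⟨z, hz, rfl⟩
  · rintro ⟨y, hy, hyz⟩
    rw [← hyz]
    show (QuotientGroup.lift M p hM) ((y : G) : G ⧸ M) = 1
    rw [QuotientGroup.lift_mk]
    exact hy

-- equiv between image of H in G ⧸ M and the quotient H ⧸ (M.subgroupOf H)
noncomputable def mapMkEquiv {G : Type} [Group G] (H M : Subgroup G) [M.Normal] :
    (↥H ⧸ M.subgroupOf H) ≃* ↥(H.map (QuotientGroup.mk' M)) := by
  set f : ↥H →* G ⧸ M := (QuotientGroup.mk' M).comp H.subtype with hf
  have hker : f.ker = M.subgroupOf H := by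
    ext x
    simp only [hf, MonoidHom.mem_ker, MonoidHom.comp_apply, Subgroup.coe_subtype,
      QuotientGroup.mk'_apply, QuotientGroup.eq_one_iff]
    rfl
  have hrange : f.range = H.map (QuotientGroup.mk' M) := by
    rw [hf, MonoidHom.range_comp, Subgroup.range_subtype]
  exact ((QuotientGroup.quotientMulEquivOfEq hker.symm).trans
    (QuotientGroup.quotientKerEquivRange f)).trans (MulEquiv.subgroupCongr hrange)

lemma main_aux (K : MelnikovFormation)
    (L1 : Type) [Group L1] [Finite L1] (L2 : Type) [Group L2] [Finite L2]
    (G : Type) [Group G] [Finite G] (p1 : G →* L1) (p2 : G →* L2)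
    (hmin : IsMinimalWitnessSystem L1 L2 G p1 p2)
    (h : K.mem ↥(p1.ker.map p2)) : K.mem ↥p1.ker := by
  obtain ⟨hw, hminle⟩ := hmin
  obtain ⟨φ⟩ := hw.ker_iso
  set N1 : Subgroup G := p1.ker with hN1
  set N2 : Subgroup G := p2.ker with hN2
  haveI hN1n : N1.Normal := p1.normal_ker
  haveI hN2n : N2.Normal := p2.normal_ker
  haveI hS1n : (Kresidue K ↥N1).Normal := Kres_normal K ↥N1
  haveI hS2n : (Kresidue K ↥N2).Normal := Kres_normal K ↥N2
  set S1 : Subgroup ↥N1 := Kresidue K ↥N1 with hS1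
  set S2 : Subgroup ↥N2 := Kresidue K ↥N2 with hS2
  set U : Subgroup G := S1.map N1.subtype with hU
  set V : Subgroup G := S2.map N2.subtype with hV
  haveI hUn : U.Normal := KresG_normal K hN1n
  haveI hVn : V.Normal := KresG_normal K hN2n
  have hUN1 : U ≤ N1 := Subgroup.map_subtype_le S1
  have hVN2 : V ≤ N2 := Subgroup.map_subtype_le S2
  -- step 1 : U ≤ N2
  have hS1le : S1 ≤ (p2.comp N1.subtype).ker := by
    rw [hS1]
    refine sInf_le ⟨inferInstance, ?_⟩
    have hr : (p2.comp N1.subtype).range = N1.map p2 := by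
      rw [MonoidHom.range_comp, Subgroup.range_subtype]
    have h' : K.mem ↥((p2.comp N1.subtype).range) := by
      rw [hr]; exact h
    exact K.mem_of_iso _ _ (QuotientGroup.quotientKerEquivRange _).symm h'
  have hUN2 : U ≤ N2 := by
    rintro x ⟨y, hy, rfl⟩
    exact hS1le hy
  -- step 2 : φ maps S1 to S2, so cards agree
  have hphi : S1.map φ.toMonoidHom = S2 := Kres_map K ↥N1 ↥N2 φ
  have hcard : Nat.card ↥U = Nat.card ↥V := by
    have e1 : ↥S1 ≃* ↥U := S1.equivMapOfInjective N1.subtype (Subgroup.subtype_injective N1)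
    have e2 : ↥S2 ≃* ↥V := S2.equivMapOfInjective N2.subtype (Subgroup.subtype_injective N2)
    have e3 : ↥S1 ≃* ↥S2 := (MulEquiv.subgroupMap φ S1).trans (MulEquiv.subgroupCongr hphi)
    calc Nat.card ↥U = Nat.card ↥S1 := Nat.card_congr e1.toEquiv.symm
      _ = Nat.card ↥S2 := Nat.card_congr e3.toEquiv
      _ = Nat.card ↥V := Nat.card_congr e2.toEquiv
  -- step 3 : U ≤ V using K-perfectness of U
  have hUperf : Kresidue K ↥U = ⊤ := by
    have e1 : ↥S1 ≃* ↥U := S1.equivMapOfInjective N1.subtype (Subgroup.subtype_injective N1)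
    have := Kres_map K ↥S1 ↥U e1
    rw [Kres_perfect K ↥N1] at this
    rw [← this, Subgroup.map_top_of_surjective _ e1.surjective]
  have hUV : U ≤ V := by
    set f : ↥U →* (↥N2 ⧸ S2) := (QuotientGroup.mk' S2).comp (Subgroup.inclusion hUN2) with hfd
    have hrange : f.range = (U.subgroupOf N2).map (QuotientGroup.mk' S2) := by
      rw [hfd, MonoidHom.range_comp, Subgroup.inclusion_range]
    haveI hUsub : (U.subgroupOf N2).Normal := hUn.subgroupOf N2
    haveI hrn : f.range.Normal := by
      rw [hrange]
      exact hUsub.map _ (QuotientGroup.mk'_surjective S2)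
    have hkermem : K.mem (↥U ⧸ f.ker) := by
      have h1 : K.mem ↥f.range :=
        K.mem_of_normal _ f.range hrn (Kres_quot_mem K ↥N2)
      exact K.mem_of_iso _ _ (QuotientGroup.quotientKerEquivRange f).symm h1
    have hker_top : f.ker = ⊤ := by
      rw [eq_top_iff, ← hUperf]
      exact sInf_le ⟨inferInstance, hkermem⟩
    intro x hx
    have : f ⟨x, hx⟩ = 1 := by
      have : (⟨x, hx⟩ : ↥U) ∈ f.ker := by rw [hker_top]; trivial
      exact this
    rw [hfd] at this
    have h2 : Subgroup.inclusion hUN2 ⟨x, hx⟩ ∈ S2 := by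
      simpa [QuotientGroup.eq_one_iff] using this
    exact ⟨_, h2, rfl⟩
  have hUV' : U = V := Subgroup.eq_of_le_of_card_ge hUV hcard.ge
  -- step 4 : quotient witness
  have hsub1 : U.subgroupOf N1 = S1 := by
    rw [hU, Subgroup.subgroupOf, Subgroup.comap_map_eq_self_of_injective
      (Subgroup.subtype_injective N1)]
  have hsub2 : U.subgroupOf N2 = S2 := by
    rw [hUV', hV, Subgroup.subgroupOf, Subgroup.comap_map_eq_self_of_injective
      (Subgroup.subtype_injective N2)]
  set q1 : G ⧸ U →* L1 := QuotientGroup.lift U p1 hUN1 with hq1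
  set q2 : G ⧸ U →* L2 := QuotientGroup.lift U p2 hUN2 with hq2
  have hq1surj : Function.Surjective q1 := by
    intro y
    obtain ⟨x, hx⟩ := hw.surjective_fst y
    exact ⟨QuotientGroup.mk x, by rw [hq1]; simpa using hx⟩
  have hq2surj : Function.Surjective q2 := by
    intro y
    obtain ⟨x, hx⟩ := hw.surjective_snd y
    exact ⟨QuotientGroup.mk x, by rw [hq2]; simpa using hx⟩
  have hker1 : q1.ker = N1.map (QuotientGroup.mk' U) := ker_lift_eq p1 U hUN1
  have hker2 : q2.ker = N2.map (QuotientGroup.mk' U) := ker_lift_eq p2 U hUN2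
  have hkeriso : Nonempty (↥q1.ker ≃* ↥q2.ker) := by
    refine ⟨?_⟩
    have e1 : ↥q1.ker ≃* (↥N1 ⧸ U.subgroupOf N1) :=
      (MulEquiv.subgroupCongr hker1).trans (mapMkEquiv N1 U).symm
    have e2 : (↥N2 ⧸ U.subgroupOf N2) ≃* ↥q2.ker :=
      (mapMkEquiv N2 U).trans (MulEquiv.subgroupCongr hker2.symm)
    have emid : (↥N1 ⧸ U.subgroupOf N1) ≃* (↥N2 ⧸ U.subgroupOf N2) := by
      refine QuotientGroup.congr _ _ φ ?_
      rw [hsub1, hsub2]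
      exact hphi
    exact (e1.trans emid).trans e2
  have hwit : IsWitnessSystem L1 L2 (G ⧸ U) q1 q2 := ⟨hq1surj, hq2surj, hkeriso⟩
  have hle := hminle (G ⧸ U) inferInstance inferInstance q1 q2 hwit
  -- step 5 : conclude U = ⊥ and finish
  have hcardG : Nat.card G = Nat.card (G ⧸ U) * Nat.card ↥U :=
    Subgroup.card_eq_card_quotient_mul_card_subgroup U
  have hposQ : 0 < Nat.card (G ⧸ U) := Nat.card_pos
  have hU1 : Nat.card ↥U = 1 := by
    by_contra hne
    have h2 : 2 ≤ Nat.card ↥U := by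
      have := Nat.card_pos (α := ↥U)
      omega
    have : Nat.card (G ⧸ U) * 2 ≤ Nat.card (G ⧸ U) * Nat.card ↥U :=
      Nat.mul_le_mul_left _ h2
    omega
  have hUbot : U = ⊥ := Subgroup.card_eq_one.mp hU1
  have hS1bot : S1 = ⊥ := by
    rw [eq_bot_iff]
    intro x hx
    have hxU : (x : G) ∈ U := ⟨x, hx, rfl⟩
    rw [hUbot, Subgroup.mem_bot] at hxU
    simpa [Subgroup.mem_bot] using Subtype.ext hxU
  have hfin : K.mem (↥N1 ⧸ S1) := Kres_quot_mem K ↥N1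
  exact K.mem_of_iso _ _
    ((QuotientGroup.quotientMulEquivOfEq hS1bot).trans (QuotientGroup.quotientBot (G := ↥N1)))
    hfin

/-- Lemma 3.4(ii): in a minimal witness system, if `p2(N1) ∈ K` or `p1(N2) ∈ K`,
then `N1 ∈ K` and `N2 ∈ K`. -/
theorem kernels_mem_of_minimal_witness (K : MelnikovFormation)
    (L1 : Type) [Group L1] [Finite L1] (L2 : Type) [Group L2] [Finite L2]
    (G : Type) [Group G] [Finite G] (p1 : G →* L1) (p2 : G →* L2)
    (hmin : IsMinimalWitnessSystem L1 L2 G p1 p2)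
    (h : K.mem ↥(p1.ker.map p2) ∨ K.mem ↥(p2.ker.map p1)) :
    K.mem ↥p1.ker ∧ K.mem ↥p2.ker := by
  obtain ⟨φ⟩ := hmin.1.ker_iso
  rcases h with h1 | h2
  · have hk1 := main_aux K L1 L2 G p1 p2 hmin h1
    exact ⟨hk1, K.mem_of_iso _ _ φ hk1⟩
  · have hswap : IsMinimalWitnessSystem L2 L1 G p2 p1 := by
      refine ⟨⟨hmin.1.surjective_snd, hmin.1.surjective_fst, ⟨φ.symm⟩⟩, ?_⟩
      intro G' g f q1 q2 hwit
      exact hmin.2 G' g f q2 q1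
        ⟨hwit.surjective_snd, hwit.surjective_fst, hwit.ker_iso.map (fun e => e.symm)⟩
    have hk2 := main_aux K L2 L1 G p2 p1 hswap h2
    exact ⟨K.mem_of_iso _ _ φ.symm hk2, hk2⟩
end

section
/- Let K be a Melnikov formation, let L1 and L2 be finite groups, and let (G, p1, p2) be a witness system for the compatibility of (L1, L2) such that |G| is minimal among all witness systems for (L1, L2). Let N1 = ker(p1) and N2 = ker(p2). If O_K(p2(N1)) = 1 or O_K(p1(N2)) = 1, then O_K(N1) = 1 and O_K(N2) = 1. -/
/-! The `K`-radical `R` of `N₁ = ker p₁` is characteristic in `N₁`, hence normal in `G`. Its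
image under `p₂` is a normal `K`-subgroup of `p₂(N₁)`, hence trivial, so `R ≤ N₂` and `R` is a
normal `K`-subgroup of `N₂`. The isomorphism `N₁ ≅ N₂` carries `O_K(N₁)` onto `O_K(N₂)`, so the
two have the same order and `R = O_K(N₂)`. Then `(G ⧸ R, p₁, p₂)` is again a witness system, with
kernels `N₁ ⧸ O_K(N₁) ≅ N₂ ⧸ O_K(N₂)`, and minimality of `|G|` forces `R = 1`. -/

namespace MelnikovFormation

variable (K : MelnikovFormation) {G : Type} [Group G] [Finite G]

theorem mem_sup {A B : Subgroup G} [B.Normal] (hA : K.mem A) (hB : K.mem B) :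
    K.mem ↥(A ⊔ B) := by
  refine K.mem_of_extension _ (B.subgroupOf (A ⊔ B)) ?_ ?_
  · exact K.mem_of_iso _ _ (Subgroup.subgroupOfEquivOfLe le_sup_right).symm hB
  · exact K.mem_of_iso _ _ (QuotientGroup.quotientInfEquivProdNormalQuotient A B)
      (K.mem_quotient _ _ hA)

theorem mem_range {H : Type} [Group H] [Finite H] (f : G →* H) (hG : K.mem G) :
    K.mem f.range :=
  K.mem_of_iso _ _ (QuotientGroup.quotientKerEquivRange f) (K.mem_quotient _ f.ker hG)

theorem mem_map {H : Type} [Group H] [Finite H] (f : G →* H) {A : Subgroup G} (hA : K.mem A) :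
    K.mem ↥(A.map f) := by
  have hrange : (f.comp A.subtype).range = A.map f := by
    rw [MonoidHom.range_comp, Subgroup.range_subtype]
  exact K.mem_of_iso _ _ (MulEquiv.subgroupCongr hrange) (K.mem_range _ hA)

theorem mem_subgroupOf {A B : Subgroup G} (hAB : A ≤ B) (hA : K.mem A) :
    K.mem ↥(A.subgroupOf B) :=
  K.mem_of_iso _ _ (Subgroup.subgroupOfEquivOfLe hAB).symm hA

end MelnikovFormation

section Kradical

variable (K : MelnikovFormation) {G : Type} [Group G] [Finite G]

theorem mem_Kradical : K.mem (Kradical K G) := by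
  have hsup : SupClosed {A : Subgroup G | A.Normal ∧ K.mem A} := by
    rintro A ⟨hAn, hA⟩ B ⟨hBn, hB⟩
    exact ⟨Subgroup.sup_normal A B, K.mem_sup hA hB⟩
  have hbot : (⊥ : Subgroup G) ∈ {A : Subgroup G | A.Normal ∧ K.mem A} :=
    ⟨inferInstance, K.mem_of_subsingleton _ inferInstance⟩
  exact (hsup.sSup_mem (Set.toFinite _) hbot subset_rfl).2

theorem le_Kradical {A : Subgroup G} (hA : A.Normal) (hK : K.mem A) : A ≤ Kradical K G :=
  le_sSup ⟨hA, hK⟩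

theorem map_Kradical_le {H : Type} [Group H] [Finite H] (e : G ≃* H) :
    (Kradical K G).map (e : G →* H) ≤ Kradical K H := by
  rw [Kradical, (Subgroup.gc_map_comap (e : G →* H)).l_sSup]
  refine iSup₂_le fun A ⟨hA, hKA⟩ => ?_
  exact le_Kradical K (hA.map _ e.surjective) (K.mem_map _ hKA)

theorem Kradical_map_mulEquiv {H : Type} [Group H] [Finite H] (e : G ≃* H) :
    (Kradical K G).map (e : G →* H) = Kradical K H := by
  refine le_antisymm (map_Kradical_le K e) ?_
  rw [Subgroup.map_equiv_eq_comap_symm, ← Subgroup.map_le_iff_le_comap]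
  exact map_Kradical_le K e.symm

instance Kradical_characteristic : (Kradical K G).Characteristic :=
  Subgroup.characteristic_iff_map_eq.2 fun φ => Kradical_map_mulEquiv K φ

theorem le_map_subtype_Kradical {A N : Subgroup G} (hAN : A ≤ N) (hA : A.Normal) (hK : K.mem A) :
    A ≤ (Kradical K N).map N.subtype := by
  have := Subgroup.map_mono (f := N.subtype)
    (le_Kradical K (hA.subgroupOf N) (K.mem_subgroupOf hAN hK))
  rwa [Subgroup.subgroupOf_map_subtype, inf_eq_left.mpr hAN] at this

theorem map_subtype_Kradical_le_ker {L : Type} [Group L] [Finite L] {N : Subgroup G} [N.Normal]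
    {f : G →* L} (hf : Function.Surjective f) (h : Kradical K ↥(N.map f) = ⊥) :
    (Kradical K N).map N.subtype ≤ f.ker := by
  set R := (Kradical K N).map N.subtype
  have hRN : R.map f ≤ N.map f := Subgroup.map_mono (Subgroup.map_subtype_le _)
  have hRn : (R.map f).Normal := Subgroup.Normal.map inferInstance f hf
  have hK : K.mem ↥(R.map f) := K.mem_map f (K.mem_map N.subtype (mem_Kradical K))
  have := le_map_subtype_Kradical K hRN hRn hK
  rwa [h, Subgroup.map_bot, le_bot_iff, Subgroup.map_eq_bot_iff] at this

theorem map_subtype_Kradical_eq_of_le {N₁ N₂ : Subgroup G} [N₁.Normal] (φ : N₁ ≃* N₂)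
    (h : (Kradical K N₁).map N₁.subtype ≤ N₂) :
    (Kradical K N₁).map N₁.subtype = (Kradical K N₂).map N₂.subtype := by
  refine Subgroup.eq_of_le_of_card_ge
    (le_map_subtype_Kradical K h inferInstance (K.mem_map N₁.subtype (mem_Kradical K))) ?_
  rw [Subgroup.card_map_of_injective N₁.subtype_injective,
    Subgroup.card_map_of_injective N₂.subtype_injective, ← Kradical_map_mulEquiv K φ,
    Subgroup.card_map_of_injective φ.injective]

end Kradical

noncomputable def QuotientGroup.subgroupOfEquivMapMk' {G : Type} [Group G] (R N : Subgroup G)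
    [R.Normal] : N ⧸ R.subgroupOf N ≃* N.map (QuotientGroup.mk' R) :=
  have hker : ((QuotientGroup.mk' R).comp N.subtype).ker = R.subgroupOf N := by
    rw [← MonoidHom.comap_ker, QuotientGroup.ker_mk', Subgroup.comap_subtype]
  have hrange : ((QuotientGroup.mk' R).comp N.subtype).range = N.map (QuotientGroup.mk' R) := by
    rw [MonoidHom.range_comp, Subgroup.range_subtype]
  (QuotientGroup.quotientMulEquivOfEq hker.symm).trans
    ((QuotientGroup.quotientKerEquivRange _).trans (MulEquiv.subgroupCongr hrange))

section WitnessSystem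

variable {L₁ : Type} [Group L₁] {L₂ : Type} [Group L₂] {G : Type} [Group G]
  {p₁ : G →* L₁} {p₂ : G →* L₂}

theorem IsWitnessSystem.symm (hw : IsWitnessSystem L₁ L₂ G p₁ p₂) :
    IsWitnessSystem L₂ L₁ G p₂ p₁ :=
  ⟨hw.surjective_snd, hw.surjective_fst, hw.ker_iso.map MulEquiv.symm⟩

theorem IsWitnessSystem.quotient (hw : IsWitnessSystem L₁ L₂ G p₁ p₂) {R : Subgroup G} [R.Normal]
    (h₁ : R ≤ p₁.ker) (h₂ : R ≤ p₂.ker) (φ : p₁.ker ≃* p₂.ker)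
    (hφ : (R.subgroupOf p₁.ker).map (φ : p₁.ker →* p₂.ker) = R.subgroupOf p₂.ker) :
    IsWitnessSystem L₁ L₂ (G ⧸ R) (QuotientGroup.lift R p₁ h₁) (QuotientGroup.lift R p₂ h₂) := by
  refine ⟨QuotientGroup.lift_surjective_of_surjective _ _ hw.surjective_fst _,
    QuotientGroup.lift_surjective_of_surjective _ _ hw.surjective_snd _, ⟨?_⟩⟩
  rw [QuotientGroup.ker_lift, QuotientGroup.ker_lift]
  exact (QuotientGroup.subgroupOfEquivMapMk' R _).symm.trans <|
    (QuotientGroup.congr _ _ φ hφ).trans (QuotientGroup.subgroupOfEquivMapMk' R _)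

variable [Finite G]

theorem IsMinimalWitnessSystem.symm (hmin : IsMinimalWitnessSystem L₁ L₂ G p₁ p₂) :
    IsMinimalWitnessSystem L₂ L₁ G p₂ p₁ :=
  ⟨hmin.1.symm, fun G' _ _ q₂ q₁ hw => hmin.2 G' ‹_› ‹_› q₁ q₂ hw.symm⟩

theorem IsMinimalWitnessSystem.eq_bot_of_quotient (hmin : IsMinimalWitnessSystem L₁ L₂ G p₁ p₂)
    {R : Subgroup G} [R.Normal] {q₁ : G ⧸ R →* L₁} {q₂ : G ⧸ R →* L₂}
    (hw : IsWitnessSystem L₁ L₂ (G ⧸ R) q₁ q₂) : R = ⊥ := by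
  have hle := hmin.2 (G ⧸ R) _ inferInstance q₁ q₂ hw
  rw [Subgroup.card_eq_card_quotient_mul_card_subgroup R] at hle
  rw [← Subgroup.card_le_one_iff_eq_bot]
  exact (mul_le_iff_le_one_right Nat.card_pos).mp hle

theorem IsMinimalWitnessSystem.Kradical_ker_eq_bot (K : MelnikovFormation) [Finite L₁]
    [Finite L₂] (hmin : IsMinimalWitnessSystem L₁ L₂ G p₁ p₂)
    (h : Kradical K ↥(p₁.ker.map p₂) = ⊥) :
    Kradical K p₁.ker = ⊥ ∧ Kradical K p₂.ker = ⊥ := by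
  obtain ⟨φ⟩ := hmin.1.ker_iso
  set R := (Kradical K p₁.ker).map p₁.ker.subtype
  have hR₂ : R ≤ p₂.ker := map_subtype_Kradical_le_ker K hmin.1.surjective_snd h
  have hReq : R = (Kradical K p₂.ker).map p₂.ker.subtype := map_subtype_Kradical_eq_of_le K φ hR₂
  have hφ : (R.subgroupOf p₁.ker).map (φ : p₁.ker →* p₂.ker) = R.subgroupOf p₂.ker := by
    rw [← Subgroup.comap_subtype, ← Subgroup.comap_subtype, Subgroup.comap_map_eq_self_of_injective
      p₁.ker.subtype_injective, hReq, Subgroup.comap_map_eq_self_of_injective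
      p₂.ker.subtype_injective, Kradical_map_mulEquiv]
  have hRbot : R = ⊥ :=
    hmin.eq_bot_of_quotient (hmin.1.quotient (Subgroup.map_subtype_le _) hR₂ φ hφ)
  exact ⟨(Subgroup.map_eq_bot_iff_of_injective _ p₁.ker.subtype_injective).mp hRbot,
    (Subgroup.map_eq_bot_iff_of_injective _ p₂.ker.subtype_injective).mp (hReq ▸ hRbot)⟩

end WitnessSystem

/-- Lemma 3.4(iii): in a minimal witness system, if `O_K(p2(N1)) = 1` or
`O_K(p1(N2)) = 1`, then `O_K(N1) = 1 = O_K(N2)`. -/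
theorem kernels_radical_trivial_of_minimal_witness (K : MelnikovFormation)
    (L1 : Type) [Group L1] [Finite L1] (L2 : Type) [Group L2] [Finite L2]
    (G : Type) [Group G] [Finite G] (p1 : G →* L1) (p2 : G →* L2)
    (hmin : IsMinimalWitnessSystem L1 L2 G p1 p2)
    (h : Kradical K ↥(p1.ker.map p2) = ⊥ ∨ Kradical K ↥(p2.ker.map p1) = ⊥) :
    Kradical K ↥p1.ker = ⊥ ∧ Kradical K ↥p2.ker = ⊥ := by
  rcases h with h | h
  · exact hmin.Kradical_ker_eq_bot K h
  · exact (hmin.symm.Kradical_ker_eq_bot K h).symm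
end

section
/- Let L1 and L2 be finite groups and let (G, p1, p2) be a witness system for the compatibility of (L1, L2) such that |G| is minimal among all witness systems for (L1, L2). Then L2 and G have the same set of composition factors up to isomorphism (ignoring multiplicity): a finite simple group T is a composition factor of L2 if and only if T is a composition factor of G. -/
/-- A subgroup `H` of `G` is subnormal if there is a chain
`H = H_0 ⊴ H_1 ⊴ ⋯ ⊴ H_n = G` with each term normal in the next. -/
def IsSubnormal {G : Type} [Group G] (H : Subgroup G) : Prop :=
  ∃ (n : ℕ) (c : Fin (n + 1) → Subgroup G), c 0 = H ∧ c (Fin.last n) = ⊤ ∧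
    ∀ i : Fin n, ((c i.castSucc).subgroupOf (c i.succ)).Normal

/-- A finite simple group `T` is a composition factor of `G` if there are subgroups
`K ⊴ H` of `G` with `H` subnormal in `G` and `H ⧸ K ≅ T`. -/
def IsCompositionFactorOf (T : Type) [Group T] (G : Type) [Group G] : Prop :=
  ∃ (H K : Subgroup G) (_ : IsSubnormal H) (_ : K ≤ H) (h : (K.subgroupOf H).Normal),
    letI := h
    Nonempty ((↥H ⧸ K.subgroupOf H) ≃* T)

def IsSubquotient (T G : Type*) [Group T] [Group G] : Prop :=
  ∃ (H : Subgroup G) (f : H →* T), Function.Surjective f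

namespace IsSubquotient

variable {T G Q : Type*} [Group T] [Group G] [Group Q]

theorem of_surjective (f : G →* T) (hf : Function.Surjective f) : IsSubquotient T G :=
  ⟨⊤, f.comp (⊤ : Subgroup G).subtype, fun t => by
    obtain ⟨g, rfl⟩ := hf t
    exact ⟨⟨g, trivial⟩, rfl⟩⟩

theorem of_injective (f : G →* Q) (hf : Function.Injective f) (h : IsSubquotient T G) :
    IsSubquotient T Q := by
  obtain ⟨H, g, hg⟩ := h
  exact ⟨H.map f, g.comp (H.equivMapOfInjective f hf).symm.toMonoidHom,
    hg.comp (MulEquiv.surjective _)⟩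

theorem of_mulEquiv (e : G ≃* Q) (h : IsSubquotient T G) : IsSubquotient T Q :=
  h.of_injective e.toMonoidHom e.injective

theorem of_quotient (f : G →* Q) (hf : Function.Surjective f) (h : IsSubquotient T Q) :
    IsSubquotient T G := by
  obtain ⟨H, g, hg⟩ := h
  exact ⟨H.comap f, g.comp (f.subgroupComap H),
    hg.comp (f.subgroupComap_surjective_of_surjective H hf)⟩

theorem of_eq_ker (f : G →* Q) (N : Subgroup G) [N.Normal] (hN : N = f.ker)
    (h : IsSubquotient T (G ⧸ N)) : IsSubquotient T Q :=
  h.of_injective _ ((QuotientGroup.injective_lift_iff N f hN.le).2 hN)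

theorem not_of_subsingleton [Nontrivial T] [Subsingleton G] : ¬ IsSubquotient T G := by
  rintro ⟨H, f, hf⟩
  exact not_subsingleton T hf.subsingleton

variable [IsSimpleGroup T]

theorem ker_or (f : G →* Q) (h : IsSubquotient T G) :
    IsSubquotient T f.ker ∨ IsSubquotient T Q := by
  obtain ⟨H, g, hg⟩ := h
  have hnormal : ((f.ker.subgroupOf H).map g).Normal := Subgroup.Normal.map inferInstance g hg
  rcases IsSimpleGroup.eq_bot_or_eq_top_of_normal _ hnormal with hbot | htop
  · right
    have hle : (f.comp H.subtype).ker ≤ g.ker := (Subgroup.map_eq_bot_iff _).1 hbot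
    exact of_eq_ker _ _ rfl <| of_surjective _ <|
      QuotientGroup.lift_surjective_of_surjective _ g hg hle
  · left
    have hsurj : Function.Surjective (g.comp (f.ker.subgroupOf H).subtype) := fun t => by
      obtain ⟨x, hx, rfl⟩ : t ∈ (f.ker.subgroupOf H).map g := htop ▸ trivial
      exact ⟨⟨x, hx⟩, rfl⟩
    refine (of_surjective _ hsurj).of_injective
      ((H.subtype.comp (f.ker.subgroupOf H).subtype).codRestrict f.ker fun x => x.2) ?_
    intro x y hxy
    exact Subtype.ext (Subtype.ext (congrArg (fun z : f.ker => (z : G)) hxy))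

theorem prod_or {A B : Type*} [Group A] [Group B] (h : IsSubquotient T (A × B)) :
    IsSubquotient T A ∨ IsSubquotient T B :=
  (h.ker_or (MonoidHom.snd A B)).imp_left <|
    of_injective ((MonoidHom.fst A B).comp (MonoidHom.snd A B).ker.subtype) fun x y hxy =>
      Subtype.ext (Prod.ext hxy (x.2.trans y.2.symm))

theorem quotient_or {N M : Subgroup G} [N.Normal] [M.Normal] (hNM : N ≤ M) (K : Subgroup M)
    [K.Normal] (hK : K.map M.subtype ≤ N) (h : IsSubquotient T (G ⧸ N)) :
    IsSubquotient T (M ⧸ K) ∨ IsSubquotient T (G ⧸ M) := by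
  let f : G ⧸ N →* G ⧸ M := QuotientGroup.map N M (MonoidHom.id G) hNM
  refine (h.ker_or f).imp_left fun hker => ?_
  let g : M →* f.ker := ((QuotientGroup.mk' N).comp M.subtype).codRestrict f.ker fun x =>
    (QuotientGroup.eq_one_iff (x : G)).2 x.2
  have hg : Function.Surjective g := by
    rintro ⟨z, hz⟩
    obtain ⟨x, rfl⟩ := QuotientGroup.mk_surjective z
    exact ⟨⟨x, (QuotientGroup.eq_one_iff x).1 hz⟩, rfl⟩
  have hKg : K ≤ g.ker := fun x hx =>
    Subtype.ext ((QuotientGroup.eq_one_iff (x : G)).2 (hK ⟨x, hx, rfl⟩))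
  exact hker.of_quotient _ (QuotientGroup.lift_surjective_of_surjective K g hg hKg)

end IsSubquotient

namespace Subquotient

def residual (T X : Type*) [Group T] [Group X] : Subgroup X :=
  sInf {N | ∃ _ : N.Normal, ¬ IsSubquotient T (X ⧸ N)}

variable {T X Y Q : Type*} [Group T] [Group X] [Group Y] [Group Q]

theorem residual_le (N : Subgroup X) [N.Normal] (h : ¬ IsSubquotient T (X ⧸ N)) :
    residual T X ≤ N :=
  sInf_le ⟨inferInstance, h⟩

theorem residual_le_ker (f : X →* Q) (hQ : ¬ IsSubquotient T Q) : residual T X ≤ f.ker :=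
  residual_le f.ker fun h => hQ (h.of_eq_ker f _ rfl)

theorem map_residual_le (e : X ≃* Y) : (residual T X).map e.toMonoidHom ≤ residual T Y := by
  refine le_sInf fun N ⟨_, hN⟩ => Subgroup.map_le_iff_le_comap.2 ?_
  have := residual_le_ker ((QuotientGroup.mk' N).comp e.toMonoidHom) hN
  rwa [← MonoidHom.comap_ker, QuotientGroup.ker_mk'] at this

theorem map_residual (e : X ≃* Y) : (residual T X).map e.toMonoidHom = residual T Y :=
  (map_residual_le e).antisymm ((OrderIso.symm_apply_le e.mapSubgroup).1 (map_residual_le e.symm))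

instance residual_characteristic : (residual T X).Characteristic :=
  Subgroup.characteristic_iff_map_eq.2 fun e => map_residual e

variable [IsSimpleGroup T] [Finite X]

theorem not_isSubquotient_quotient_residual : ¬ IsSubquotient T (X ⧸ residual T X) := by
  -- `X ⧸ (N ⊓ M)` embeds in `(X ⧸ N) × (X ⧸ M)`.
  have hclosed : InfClosed {N : Subgroup X | ∃ _ : N.Normal, ¬ IsSubquotient T (X ⧸ N)} := by
    rintro N ⟨_, hN⟩ M ⟨_, hM⟩
    refine ⟨inferInstance, fun h => ?_⟩
    have hker : N ⊓ M = ((QuotientGroup.mk' N).prod (QuotientGroup.mk' M)).ker := by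
      rw [MonoidHom.ker_prod, QuotientGroup.ker_mk', QuotientGroup.ker_mk']
    exact (h.of_eq_ker _ _ hker).prod_or.elim hN hM
  have htop : (⊤ : Subgroup X) ∈ {N : Subgroup X | ∃ _ : N.Normal, ¬ IsSubquotient T (X ⧸ N)} :=
    have := QuotientGroup.subsingleton_quotient_top (G := X)
    ⟨inferInstance, IsSubquotient.not_of_subsingleton⟩
  obtain ⟨_, h⟩ := hclosed.sInf_mem (Set.toFinite _) htop subset_rfl
  exact h

theorem residual_ne_bot (h : IsSubquotient T X) : residual T X ≠ ⊥ := fun hbot =>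
  not_isSubquotient_quotient_residual <| h.of_injective (QuotientGroup.mk' _) <|
    (MonoidHom.ker_eq_bot_iff _).1 (by rw [QuotientGroup.ker_mk', hbot])

theorem residual_residual : residual T (residual T X) = ⊤ := by
  set R := residual T X
  -- The residual of `R` is characteristic in `R`, hence normal in `X`; modulo it, `X` is an
  -- extension of a group without subquotient `T` by another one.
  have h : ¬ IsSubquotient T (X ⧸ (residual T R).map R.subtype) := fun h =>
    (h.quotient_or (Subgroup.map_subtype_le _) (residual T R) le_rfl).elim
      not_isSubquotient_quotient_residual not_isSubquotient_quotient_residual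
  rw [eq_top_iff, ← Subgroup.map_subtype_le_map_subtype, ← MonoidHom.range_eq_map,
    Subgroup.range_subtype]
  exact residual_le _ h

end Subquotient

open Subquotient

theorem map_residual_le_ker {T G Q : Type*} [Group T] [Group G] [Group Q] (K : Subgroup G)
    (f : G →* Q) (hQ : ¬ IsSubquotient T Q) : (residual T K).map K.subtype ≤ f.ker :=
  Subgroup.map_le_iff_le_comap.2 (residual_le_ker (f.comp K.subtype) hQ)

section SubgroupResidual

variable {T G : Type*} [Group T] [Group G] [IsSimpleGroup T] [Finite G]

theorem map_residual_le_map_residual {K₁ K₂ : Subgroup G}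
    (h : (residual T K₁).map K₁.subtype ≤ K₂) :
    (residual T K₁).map K₁.subtype ≤ (residual T K₂).map K₂.subtype := by
  let f : residual T K₁ →* K₂ ⧸ residual T K₂ := (QuotientGroup.mk' _).comp <|
    (K₁.subtype.comp (residual T K₁).subtype).codRestrict K₂ fun x => h ⟨x, x.2, rfl⟩
  have hf : residual T (residual T K₁) ≤ f.ker :=
    residual_le_ker f not_isSubquotient_quotient_residual
  rintro _ ⟨x, hx, rfl⟩
  rw [residual_residual] at hf
  exact ⟨_, (QuotientGroup.eq_one_iff _).1 (hf (Subgroup.mem_top ⟨x, hx⟩)), rfl⟩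

theorem map_residual_eq_of_le {K₁ K₂ : Subgroup G} (φ : K₁ ≃* K₂)
    (h : (residual T K₁).map K₁.subtype ≤ K₂) :
    (residual T K₁).map K₁.subtype = (residual T K₂).map K₂.subtype := by
  refine Subgroup.eq_of_le_of_card_ge (map_residual_le_map_residual h) (le_of_eq ?_)
  rw [Subgroup.card_map_of_injective K₁.subtype_injective,
    Subgroup.card_map_of_injective K₂.subtype_injective, ← map_residual φ,
    Subgroup.card_map_of_injective φ.injective]

end SubgroupResidual

noncomputable def kerLiftEquiv {G Q : Type*} [Group G] [Group Q] (f : G →* Q) (N : Subgroup G)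
    [N.Normal] (hN : N ≤ f.ker) :
    (QuotientGroup.lift N f hN).ker ≃* f.ker ⧸ N.subgroupOf f.ker :=
  let g : f.ker →* (QuotientGroup.lift N f hN).ker :=
    ((QuotientGroup.mk' N).comp f.ker.subtype).codRestrict _ fun x => x.2
  have hg : Function.Surjective g := by
    rintro ⟨z, hz⟩
    obtain ⟨x, rfl⟩ := QuotientGroup.mk_surjective z
    exact ⟨⟨x, hz⟩, rfl⟩
  have hker : N.subgroupOf f.ker = g.ker := by
    ext x
    rw [Subgroup.mem_subgroupOf, MonoidHom.mem_ker, ← QuotientGroup.eq_one_iff, Subtype.ext_iff]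
    rfl
  (QuotientGroup.liftEquiv _ hg hker).symm

theorem IsWitnessSystem.quotient_s11 {L1 L2 G : Type} [Group L1] [Group L2] [Group G]
    {p1 : G →* L1} {p2 : G →* L2} (hw : IsWitnessSystem L1 L2 G p1 p2) (N : Subgroup G)
    [N.Normal] (h1 : N ≤ p1.ker) (h2 : N ≤ p2.ker)
    (e : p1.ker ⧸ N.subgroupOf p1.ker ≃* p2.ker ⧸ N.subgroupOf p2.ker) :
    IsWitnessSystem L1 L2 (G ⧸ N) (QuotientGroup.lift N p1 h1) (QuotientGroup.lift N p2 h2) where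
  surjective_fst := QuotientGroup.lift_surjective_of_surjective _ _ hw.surjective_fst _
  surjective_snd := QuotientGroup.lift_surjective_of_surjective _ _ hw.surjective_snd _
  ker_iso := ⟨(kerLiftEquiv p1 N h1).trans (e.trans (kerLiftEquiv p2 N h2).symm)⟩

theorem IsMinimalWitnessSystem.eq_bot {L1 L2 G : Type} [Group L1] [Group L2] [Group G]
    [Finite G] {p1 : G →* L1} {p2 : G →* L2} (hmin : IsMinimalWitnessSystem L1 L2 G p1 p2)
    (N : Subgroup G) [N.Normal] (h1 : N ≤ p1.ker) (h2 : N ≤ p2.ker)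
    (e : p1.ker ⧸ N.subgroupOf p1.ker ≃* p2.ker ⧸ N.subgroupOf p2.ker) : N = ⊥ := by
  have hle := hmin.2 _ _ inferInstance _ _ (hmin.1.quotient_s11 N h1 h2 e)
  have hcard := Subgroup.card_eq_card_quotient_mul_card_subgroup N
  have hpos : 0 < Nat.card (G ⧸ N) := Nat.card_pos
  exact Subgroup.eq_bot_of_card_eq N (by nlinarith [Nat.card_pos (α := N)])

/-- The chain in `IsSubnormal` need not be increasing, so `H, ⊥, ⊤` always is one. -/
theorem isSubnormal {G : Type} [Group G] (H : Subgroup G) : IsSubnormal H := by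
  refine ⟨2, ![H, ⊥, ⊤], rfl, rfl, fun i => ?_⟩
  fin_cases i
  · show (H.subgroupOf ⊥).Normal
    exact ⟨fun n hn g => by rwa [Subsingleton.elim (g * n * g⁻¹) n]⟩
  · show ((⊥ : Subgroup G).subgroupOf ⊤).Normal
    infer_instance

theorem isCompositionFactorOf_iff_isSubquotient {T G : Type} [Group T] [Group G] :
    IsCompositionFactorOf T G ↔ IsSubquotient T G := by
  constructor
  · rintro ⟨H, K, -, -, hK, ⟨e⟩⟩
    exact (IsSubquotient.of_surjective (e.toMonoidHom.comp (QuotientGroup.mk' _))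
      (e.surjective.comp (QuotientGroup.mk'_surjective _))).of_injective H.subtype
      H.subtype_injective
  · rintro ⟨H, f, hf⟩
    have hK : (f.ker.map H.subtype).subgroupOf H = f.ker :=
      Subgroup.comap_map_eq_self_of_injective H.subtype_injective f.ker
    have : ((f.ker.map H.subtype).subgroupOf H).Normal := by rw [hK]; infer_instance
    exact ⟨H, f.ker.map H.subtype, isSubnormal H, Subgroup.map_subtype_le f.ker, this,
      ⟨(QuotientGroup.quotientMulEquivOfEq hK).trans
        (QuotientGroup.quotientKerEquivOfSurjective f hf)⟩⟩

theorem quot_comp_factors_of_minimal_witness_general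
    (L1 : Type) [Group L1] (L2 : Type) [Group L2]
    (G : Type) [Group G] [Finite G] (p1 : G →* L1) (p2 : G →* L2)
    (hmin : IsMinimalWitnessSystem L1 L2 G p1 p2)
    (T : Type) [Group T] (hT : IsSimpleGroup T) :
    IsCompositionFactorOf T L2 ↔ IsCompositionFactorOf T G := by
  simp only [isCompositionFactorOf_iff_isSubquotient]
  refine ⟨(·.of_quotient p2 hmin.1.surjective_snd), fun hG => by_contra fun hL2 => ?_⟩
  obtain ⟨φ⟩ := hmin.1.ker_iso
  set R := (residual T p1.ker).map p1.ker.subtype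
  have hR₂ : R ≤ p2.ker := map_residual_le_ker p1.ker p2 hL2
  have hR : R = (residual T p2.ker).map p2.ker.subtype := map_residual_eq_of_le φ hR₂
  have h₁ : R.subgroupOf p1.ker = residual T p1.ker :=
    Subgroup.comap_map_eq_self_of_injective p1.ker.subtype_injective _
  have h₂ : R.subgroupOf p2.ker = residual T p2.ker :=
    hR ▸ Subgroup.comap_map_eq_self_of_injective p2.ker.subtype_injective _
  have hbot : R = ⊥ := hmin.eq_bot R (Subgroup.map_subtype_le _) hR₂ <|
    (QuotientGroup.quotientMulEquivOfEq h₁).trans <|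
      (QuotientGroup.congr _ _ φ (map_residual φ)).trans
        (QuotientGroup.quotientMulEquivOfEq h₂).symm
  have hK₁ : IsSubquotient T p1.ker := ((hG.ker_or p2).resolve_right hL2).of_mulEquiv φ.symm
  exact residual_ne_bot hK₁ <|
    (Subgroup.map_eq_bot_iff_of_injective _ p1.ker.subtype_injective).1 hbot

/-- Lemma 3.4(v): in a minimal witness system, `L2` and `G` have the same set of
composition factors (ignoring multiplicity). -/
theorem quot_comp_factors_of_minimal_witness
    (L1 : Type) [Group L1] [Finite L1] (L2 : Type) [Group L2] [Finite L2]
    (G : Type) [Group G] [Finite G] (p1 : G →* L1) (p2 : G →* L2)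
    (hmin : IsMinimalWitnessSystem L1 L2 G p1 p2)
    (T : Type) [Group T] [Finite T] (hT : IsSimpleGroup T) :
    IsCompositionFactorOf T L2 ↔ IsCompositionFactorOf T G :=
  quot_comp_factors_of_minimal_witness_general L1 L2 G p1 p2 hmin T hT
end

section
/- (Sims' Lemma) Let L1 and L2 be nontrivial compatible finite groups. If (G, p1, p2) is a witness system for the compatibility of (L1, L2) such that |G| is minimal among all witness systems for (L1, L2), then (p1(ker(p2)), p2(ker(p1))) is a Sims pair for (L1, L2); that is, p1(ker(p2)) ⊴ L1 and p2(ker(p1)) ⊴ L2 are compatible, and L1/p1(ker(p2)) and L2/p2(ker(p1)) are isomorphic and nontrivial. -/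
/-- Two finite groups `L1` and `L2` are compatible if some finite group `G` has
isomorphic normal subgroups `N1 ≅ N2` with `G ⧸ N1 ≅ L1` and `G ⧸ N2 ≅ L2`. -/
def Compatible (L1 : Type) [Group L1] (L2 : Type) [Group L2] : Prop :=
  ∃ (G : Type) (_ : Group G) (_ : Finite G) (N1 N2 : Subgroup G)
    (h1 : N1.Normal) (h2 : N2.Normal),
    Nonempty (↥N1 ≃* ↥N2) ∧
      (letI := h1; letI := h2;
        Nonempty ((G ⧸ N1) ≃* L1) ∧ Nonempty ((G ⧸ N2) ≃* L2))

/-- `(M1, M2)` is a Sims pair for `(L1, L2)`: `M1 ⊴ L1` and `M2 ⊴ L2` are compatible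
and `L1 ⧸ M1 ≅ L2 ⧸ M2` is nontrivial. -/
def IsSimsPair (L1 : Type) [Group L1] (L2 : Type) [Group L2]
    (M1 : Subgroup L1) (M2 : Subgroup L2) : Prop :=
  ∃ (h1 : M1.Normal) (h2 : M2.Normal),
    Compatible ↥M1 ↥M2 ∧
      (letI := h1; letI := h2;
        Nonempty ((L1 ⧸ M1) ≃* (L2 ⧸ M2)) ∧ Nontrivial (L1 ⧸ M1))

/-! If `L1 ⧸ p1(ker p2)` were trivial, so would be `L2 ⧸ p2(ker p1)`, since both are
`G ⧸ (ker p1 ⊔ ker p2)`. Then `p1` restricted to `ker p2`, together with `p2` restricted to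
`ker p1` and moved to `ker p2` along `ker p1 ≅ ker p2`, would be a witness system on the proper
subgroup `ker p2`: both kernels are copies of `ker p1 ⊓ ker p2`. This contradicts minimality.
The same pair of maps, with codomains cut down to their ranges, shows that `p1(ker p2)` and
`p2(ker p1)` are compatible. -/

open Function

namespace Subgroup

variable {G : Type*} [Group G]

def subgroupOfEquivInf (H K : Subgroup G) : H.subgroupOf K ≃* ↥(H ⊓ K) :=
  (MulEquiv.subgroupCongr (inf_subgroupOf_right H K).symm).trans
    (subgroupOfEquivOfLe inf_le_right)

def subgroupOfEquivSubgroupOf (H K : Subgroup G) : H.subgroupOf K ≃* K.subgroupOf H :=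
  (subgroupOfEquivInf H K).trans
    ((MulEquiv.subgroupCongr (inf_comm H K)).trans (subgroupOfEquivInf K H).symm)

end Subgroup

theorem MonoidHom.card_ker_lt_card {G L : Type*} [Group G] [Group L] [Nontrivial L] [Finite G]
    {f : G →* L} (hf : Surjective f) : Nat.card f.ker < Nat.card G := by
  refine f.ker.card_le_card_group.lt_of_ne fun hcard => ?_
  have hf1 : f = 1 := MonoidHom.ker_eq_top_iff.1 ((Subgroup.card_eq_iff_eq_top _).1 hcard)
  obtain ⟨y, hy⟩ := exists_ne (1 : L)
  obtain ⟨g, rfl⟩ := hf y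
  exact hy (by rw [hf1, MonoidHom.one_apply])

noncomputable def QuotientGroup.comapEquivOfSurjective {G L : Type*} [Group G] [Group L]
    {f : G →* L} (hf : Surjective f) (M : Subgroup L) [M.Normal] : G ⧸ M.comap f ≃* L ⧸ M :=
  (QuotientGroup.quotientMulEquivOfEq <| by rw [← MonoidHom.comap_ker, QuotientGroup.ker_mk']).trans
    (QuotientGroup.quotientKerEquivOfSurjective ((QuotientGroup.mk' M).comp f)
      ((QuotientGroup.mk'_surjective M).comp hf))

theorem compatible_range_of_ker_equiv {G L1 L2 : Type} [Group G] [Finite G] [Group L1]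
    [Group L2] (f1 : G →* L1) (f2 : G →* L2) (e : f1.ker ≃* f2.ker) :
    Compatible f1.range f2.range :=
  ⟨G, inferInstance, inferInstance, f1.ker, f2.ker, inferInstance, inferInstance, ⟨e⟩,
    ⟨QuotientGroup.quotientKerEquivRange f1⟩, ⟨QuotientGroup.quotientKerEquivRange f2⟩⟩

section KernelTransfer

variable {G L1 L2 : Type} [Group G] [Group L1] [Group L2] {p1 : G →* L1} {p2 : G →* L2}

def transferredSnd (φ : p1.ker ≃* p2.ker) : p2.ker →* L2 :=
  (p2.domRestrict p1.ker).comp (φ.symm : p2.ker →* p1.ker)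

theorem range_transferredSnd (φ : p1.ker ≃* p2.ker) :
    (transferredSnd φ).range = p1.ker.map p2 := by
  rw [transferredSnd, MonoidHom.range_comp,
    MonoidHom.range_eq_top_of_surjective _ φ.symm.surjective, ← MonoidHom.range_eq_map,
    MonoidHom.domRestrict_range]

theorem ker_transferredSnd (φ : p1.ker ≃* p2.ker) :
    (transferredSnd φ).ker = (p2.ker.subgroupOf p1.ker).map (φ : p1.ker →* p2.ker) := by
  rw [transferredSnd, ← MonoidHom.comap_ker, MonoidHom.ker_domRestrict]
  exact Subgroup.comap_equiv_eq_map_symm φ.symm _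

def kerDomRestrictEquivKerTransferredSnd (φ : p1.ker ≃* p2.ker) :
    (p1.domRestrict p2.ker).ker ≃* (transferredSnd φ).ker :=
  (p1.ker.subgroupOfEquivSubgroupOf p2.ker).trans <|
    (φ.subgroupMap _).trans (MulEquiv.subgroupCongr (ker_transferredSnd φ).symm)

theorem compatible_map_ker [Finite G] (φ : p1.ker ≃* p2.ker) :
    Compatible (p2.ker.map p1) (p1.ker.map p2) := by
  have h := compatible_range_of_ker_equiv _ _ (kerDomRestrictEquivKerTransferredSnd φ)
  rwa [MonoidHom.domRestrict_range, range_transferredSnd] at h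

theorem isWitnessSystem_domRestrict_ker (φ : p1.ker ≃* p2.ker) (h1 : p2.ker.map p1 = ⊤)
    (h2 : p1.ker.map p2 = ⊤) :
    IsWitnessSystem L1 L2 p2.ker (p1.domRestrict p2.ker) (transferredSnd φ) where
  surjective_fst := MonoidHom.range_eq_top.1 (by rw [MonoidHom.domRestrict_range, h1])
  surjective_snd := MonoidHom.range_eq_top.1 (by rw [range_transferredSnd, h2])
  ker_iso := ⟨kerDomRestrictEquivKerTransferredSnd φ⟩

noncomputable def quotientMapKerEquiv (hs1 : Surjective p1) (hs2 : Surjective p2)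
    [(p2.ker.map p1).Normal] [(p1.ker.map p2).Normal] :
    L1 ⧸ p2.ker.map p1 ≃* L2 ⧸ p1.ker.map p2 :=
  (QuotientGroup.comapEquivOfSurjective hs1 _).symm.trans <|
    (QuotientGroup.quotientMulEquivOfEq <| by
      rw [Subgroup.comap_map_eq, Subgroup.comap_map_eq, sup_comm]).trans
      (QuotientGroup.comapEquivOfSurjective hs2 _)

end KernelTransfer

theorem sims_lemma_general
    (L1 : Type) [Group L1]
    (L2 : Type) [Group L2] [Nontrivial L2]
    (G : Type) [Group G] [Finite G] (p1 : G →* L1) (p2 : G →* L2)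
    (hmin : IsMinimalWitnessSystem L1 L2 G p1 p2) :
    IsSimsPair L1 L2 (p2.ker.map p1) (p1.ker.map p2) := by
  obtain ⟨⟨hs1, hs2, ⟨φ⟩⟩, hle⟩ := hmin
  have hM1 : (p2.ker.map p1).Normal := .map inferInstance p1 hs1
  have hM2 : (p1.ker.map p2).Normal := .map inferInstance p2 hs2
  let e := quotientMapKerEquiv hs1 hs2
  refine ⟨hM1, hM2, compatible_map_ker φ, ⟨e⟩, QuotientGroup.nontrivial_iff.2 fun htop1 => ?_⟩
  have htop2 : p1.ker.map p2 = ⊤ := by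
    have := QuotientGroup.subsingleton_iff.2 htop1
    exact QuotientGroup.subsingleton_iff.1 e.symm.injective.subsingleton
  exact (MonoidHom.card_ker_lt_card hs2).not_ge
    (hle _ _ inferInstance _ _ (isWitnessSystem_domRestrict_ker φ htop1 htop2))

/-- Sims' Lemma: if `(G, p1, p2)` is a witness system of minimal order for the
compatibility of the nontrivial compatible groups `L1` and `L2`, then
`(p1(ker p2), p2(ker p1))` is a Sims pair for `(L1, L2)`. -/
theorem sims_lemma
    (L1 : Type) [Group L1] [Finite L1] [Nontrivial L1]
    (L2 : Type) [Group L2] [Finite L2] [Nontrivial L2]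
    (hcomp : Compatible L1 L2)
    (G : Type) [Group G] [Finite G] (p1 : G →* L1) (p2 : G →* L2)
    (hmin : IsMinimalWitnessSystem L1 L2 G p1 p2) :
    IsSimsPair L1 L2 (p2.ker.map p1) (p1.ker.map p2) :=
  sims_lemma_general L1 L2 G p1 p2 hmin
end

section
/- Let L1 and L2 be nontrivial compatible finite groups. If for every Sims pair (K1, K2) of (L1, L2) one has Rad(K1) = 1 or Rad(K2) = 1, then there exist normal subgroups M1 ⊴ L1 and M2 ⊴ L2 such that M1 and M2 are nontrivial and isomorphic, and L1/M1 and L2/M2 are compatible. -/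
/-- The solvable radical `Rad(G)`: the subgroup generated by all solvable normal
subgroups of `G`. -/
def solvableRadical (G : Type) [Group G] : Subgroup G :=
  sSup {A : Subgroup G | A.Normal ∧ IsSolvable ↥A}

/-!
Realise the compatibility by surjections `π₁ : G → L₁`, `π₂ : G → L₂` with isomorphic kernels
`φ : N₁ ≅ N₂`, and induct on `|G|`. If `N₁ = N₂`, then `L₁ ≅ L₂` and `M₁ = L₁`, `M₂ = L₂` work.
If `N₁N₂ = G`, the group `N₁` realises the compatibility as well. Otherwise `(π₁(N₂), π₂(N₁))` is
a Sims pair, and `Rad π₁(N₂) = 1` forces `Rad N₂ ≤ N₁`, whence `Rad N₁ = Rad N₂`. If this radical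
is nontrivial, it is a `φ`-invariant normal subgroup of `G` and one passes to the quotient by it.
If it is trivial, `φ` matches the nonabelian simple subnormal subgroups (components) of `N₁` with
those of `N₂`, up to isomorphism. When all of them lie in `N₁ ∩ N₂` the subgroup they generate is
`φ`-invariant, and again one passes to a quotient. Otherwise let `Eᵢ` be generated by the
components of `Nᵢ` not contained in the other kernel: `E₁ ≅ E₂`, and `E₁` centralises `N₂` and
meets it trivially (the intersection is central in `N₂`, and `Rad N₂ = 1`). Then
`M₁ = π₁(E₂)`, `M₂ = π₂(E₁)` work, `G` realising the compatibility of `L₁/M₁` and `L₂/M₂` through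
the kernels `E₂N₁ ≅ E₂ × N₁ ≅ E₁ × N₂ ≅ E₁N₂`.
-/

open scoped Pointwise

section General

variable {G G' : Type*} [Group G] [Group G']

namespace Subgroup

theorem map_sSup_eq_of_forall {f : G →* G'} {S : Set (Subgroup G)} {T : Set (Subgroup G')}
    (hST : ∀ A ∈ S, A.map f ∈ T) (hTS : ∀ B ∈ T, ∃ A ∈ S, B ≤ A.map f) :
    (sSup S).map f = sSup T := by
  rw [(gc_map_comap f).l_sSup]
  refine le_antisymm (iSup₂_le fun A hA => le_sSup (hST A hA)) (sSup_le fun B hB => ?_)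
  obtain ⟨A, hA, hBA⟩ := hTS B hB
  exact hBA.trans (le_iSup₂_of_le A hA le_rfl)

theorem map_sup_ker (f : G →* G') (H : Subgroup G) : (H ⊔ f.ker).map f = H.map f := by
  rw [map_sup, (map_eq_bot_iff _).mpr le_rfl, sup_bot_eq]

theorem normal_sSup_of_forall_conj_smul_mem {S : Set (Subgroup G)}
    (hS : ∀ g : G, ∀ Q ∈ S, MulAut.conj g • Q ∈ S) : (sSup S).Normal := by
  refine ⟨fun n hn g => ?_⟩
  have hle : MulAut.conj g • sSup S ≤ sSup S :=
    pointwise_smul_subset_iff.mpr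
      (sSup_le fun Q hQ => pointwise_smul_subset_iff.mp (le_sSup (hS g Q hQ)))
  simpa using hle (smul_mem_pointwise_smul n (MulAut.conj g) _ hn)

theorem card_lt_card_of_ne_top [Finite G] {H : Subgroup G} (h : H ≠ ⊤) :
    Nat.card H < Nat.card G :=
  lt_of_le_of_ne H.card_le_card_group (mt (card_eq_iff_eq_top H).mp h)

theorem card_quotient_lt [Finite G] {H : Subgroup G} [H.Normal] (h : H ≠ ⊥) :
    Nat.card (G ⧸ H) < Nat.card G := by
  rw [H.card_eq_card_quotient_mul_card_subgroup]
  exact (Nat.lt_mul_iff_one_lt_right Nat.card_pos).mpr ((one_lt_card_iff_ne_bot H).mpr h)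

theorem nonempty_mulEquiv_map_of_disjoint_ker (f : G →* G') {H : Subgroup G}
    (h : H ⊓ f.ker = ⊥) : Nonempty (H ≃* H.map f) := by
  have hinj : Function.Injective (f.subgroupMap H) := by
    rw [← MonoidHom.ker_eq_bot_iff, ker_subgroupMap, subgroupOf_eq_bot, disjoint_iff, inf_comm, h]
  exact ⟨MulEquiv.ofBijective _ ⟨hinj, f.subgroupMap_surjective H⟩⟩

theorem nonempty_subgroupOf_mulEquiv (H K : Subgroup G) :
    Nonempty (H.subgroupOf K ≃* K.subgroupOf H) :=
  ⟨(equivMapOfInjective _ _ K.subtype_injective).trans <|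
    (MulEquiv.subgroupCongr (by rw [subgroupOf_map_subtype, subgroupOf_map_subtype, inf_comm])
      |>.trans (equivMapOfInjective _ _ H.subtype_injective).symm)⟩

theorem nonempty_sup_mulEquiv_prod {H K : Subgroup G} (hc : H ≤ centralizer K) (hd : H ⊓ K = ⊥) :
    Nonempty (↥(H ⊔ K) ≃* H × K) := by
  have hcomm : ∀ (h : H) (k : K), Commute (H.subtype h) (K.subtype k) := fun h k =>
    (mem_centralizer_iff.mp (hc h.2) k k.2).symm
  have hinj : Function.Injective (H.subtype.noncommCoprod K.subtype hcomm) :=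
    (MonoidHom.noncommCoprod_injective _ _ hcomm).mpr
      ⟨H.subtype_injective, K.subtype_injective,
        by rwa [range_subtype, range_subtype, disjoint_iff]⟩
  have hrange : (H.subtype.noncommCoprod K.subtype hcomm).range = H ⊔ K := by
    rw [MonoidHom.noncommCoprod_range, range_subtype, range_subtype]
  exact ⟨(MulEquiv.subgroupCongr hrange.symm).trans (MonoidHom.ofInjective hinj).symm⟩

theorem nonempty_pi_mulEquiv_iSup {ι : Type*} [Finite ι] {H : ι → Subgroup G}
    (hcomm : Pairwise fun i j => ∀ x y : G, x ∈ H i → y ∈ H j → Commute x y)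
    (hind : iSupIndep H) : Nonempty ((∀ i, H i) ≃* ↥(⨆ i, H i)) := by
  have := Fintype.ofFinite ι
  exact ⟨(MonoidHom.ofInjective (injective_noncommPiCoprod_of_iSupIndep (hcomm := hcomm) hind))
    |>.trans (MulEquiv.subgroupCongr noncommPiCoprod_range)⟩

theorem inf_centralizer_eq_bot_of_center_eq_bot {H : Subgroup G} (h : center H = ⊥) :
    H ⊓ centralizer H = ⊥ := by
  refine eq_bot_iff.mpr fun x ⟨hxH, hxC⟩ => ?_
  have hx : (⟨x, hxH⟩ : H) ∈ center H :=
    mem_center_iff.mpr fun y => Subtype.ext (mem_centralizer_iff.mp hxC y y.2)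
  rw [h, mem_bot] at hx
  exact mem_bot.mpr (congrArg Subtype.val hx)

end Subgroup

theorem MonoidHom.ker_mk'_comp {L : Type*} [Group L] (π : G →* L) (H : Subgroup G)
    [(H.map π).Normal] : ((QuotientGroup.mk' (H.map π)).comp π).ker = H ⊔ π.ker := by
  rw [← MonoidHom.comap_ker, QuotientGroup.ker_mk', Subgroup.comap_map_eq]

theorem MonoidHom.surjective_comp_subtype {L : Type*} [Group L] {π : G →* L}
    (hπ : Function.Surjective π) {H : Subgroup G} (h : H ⊔ π.ker = ⊤) :
    Function.Surjective (π.comp H.subtype) := by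
  rw [← MonoidHom.range_eq_top, MonoidHom.range_comp, Subgroup.range_subtype,
    ← Subgroup.map_sup_ker, h, ← MonoidHom.range_eq_map, MonoidHom.range_eq_top]
  exact hπ

end General

theorem exists_equiv_diff_of_equiv {α : Type*} {r : α → α → Prop} (hr : Equivalence r)
    {s t : Set α} (hs : s.Finite) (e : s ≃ t) (he : ∀ a, r (e a) a) :
    ∃ f : ↥(s \ t) ≃ ↥(t \ s), ∀ a, r (f a) a := by
  -- Count fibrewise over the `r`-classes: `s` and `t` meet each class equally often, and
  -- `s \ t`, `t \ s` differ from them by the same common part `s ∩ t`.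
  let S : Setoid α := ⟨r, hr⟩
  have ht : t.Finite := Set.finite_coe_iff.mp (have := hs.to_subtype; Finite.of_equiv s e)
  have hfiber : ∀ (u : Set α) (c : Quotient S),
      Nat.card {a : u // Quotient.mk S a = c} = (u ∩ {a | Quotient.mk S a = c}).ncard :=
    fun u c => Nat.card_congr
      (Equiv.subtypeSubtypeEquivSubtypeInter (· ∈ u) fun a => Quotient.mk S a = c)
  have hcard : ∀ c : Quotient S, ((s \ t) ∩ {a | Quotient.mk S a = c}).ncard =
      ((t \ s) ∩ {a | Quotient.mk S a = c}).ncard := by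
    intro c
    set X := {a | Quotient.mk S a = c}
    have hst : (s ∩ X).ncard = (t ∩ X).ncard :=
      Set.ncard_congr (fun a ha => (e ⟨a, ha.1⟩ : α))
        (fun a ha => ⟨(e _).2, (Quotient.sound (he ⟨a, ha.1⟩)).trans ha.2⟩)
        (fun a b ha hb h => congrArg Subtype.val (e.injective (Subtype.ext h)))
        (fun b hb => ⟨e.symm ⟨b, hb.1⟩, ⟨(e.symm _).2,
          (Quotient.sound (he (e.symm ⟨b, hb.1⟩))).symm.trans
            (by rw [Equiv.apply_symm_apply]; exact hb.2)⟩, by simp⟩)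
    have h1 := Set.ncard_inter_add_ncard_sdiff_eq_ncard (s ∩ X) t (hs.subset Set.inter_subset_left)
    have h2 := Set.ncard_inter_add_ncard_sdiff_eq_ncard (t ∩ X) s (ht.subset Set.inter_subset_left)
    rw [Set.inter_sdiff_right_comm] at h1 h2
    rw [show t ∩ X ∩ s = s ∩ X ∩ t by ext; simp only [Set.mem_inter_iff]; tauto] at h2
    omega
  have := hs.sdiff (t := t) |>.to_subtype
  have := ht.sdiff (t := s) |>.to_subtype
  refine ⟨Equiv.ofFiberEquiv fun c => (Finite.card_eq.mp
      ((hfiber _ c).trans ((hcard c).trans (hfiber _ c).symm))).some, fun a => ?_⟩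
  exact Quotient.exact (Equiv.ofFiberEquiv_map (f := fun a : ↥(s \ t) => Quotient.mk S a)
    (g := fun b : ↥(t \ s) => Quotient.mk S b) _ a)

section SolvableRadical

variable {G G' : Type} [Group G] [Group G']

open Subgroup

theorem Subgroup.isSolvable_sup (A B : Subgroup G) [A.Normal] [Group.IsSolvable A]
    [Group.IsSolvable B] : Group.IsSolvable ↥(A ⊔ B) := by
  rw [sup_comm]
  have : Group.IsSolvable (A.subgroupOf (B ⊔ A)) :=
    Group.isSolvable_of_surjective (f := (subgroupOfEquivOfLe le_sup_right).symm.toMonoidHom)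
      (MulEquiv.surjective _)
  have : Group.IsSolvable (↥(B ⊔ A) ⧸ A.subgroupOf (B ⊔ A)) :=
    Group.isSolvable_of_surjective
      (f := (QuotientGroup.quotientInfEquivProdNormalQuotient B A).toMonoidHom)
      (MulEquiv.surjective _)
  exact (Group.isSolvable_iff_subgroup_quotient (A.subgroupOf (B ⊔ A))).mpr ⟨‹_›, ‹_›⟩

theorem le_solvableRadical {A : Subgroup G} [A.Normal] [Group.IsSolvable A] :
    A ≤ solvableRadical G :=
  le_sSup ⟨‹_›, ‹_›⟩

theorem map_solvableRadical_le (f : G →* G') (hf : Function.Surjective f) :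
    (solvableRadical G).map f ≤ solvableRadical G' := by
  rw [solvableRadical, (gc_map_comap f).l_sSup]
  refine iSup₂_le fun A ⟨hA, hsA⟩ => ?_
  have := hA.map f hf
  have : Group.IsSolvable A := hsA
  have : Group.IsSolvable (A.map f) := Group.isSolvable_of_surjective (f.subgroupMap_surjective A)
  exact le_solvableRadical

theorem map_solvableRadical (e : G ≃* G') :
    (solvableRadical G).map e.toMonoidHom = solvableRadical G' := by
  refine le_antisymm (map_solvableRadical_le _ e.surjective) ?_
  calc solvableRadical G'
      = ((solvableRadical G').map e.symm.toMonoidHom).map e.toMonoidHom :=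
        (e.mapSubgroup.apply_symm_apply _).symm
    _ ≤ (solvableRadical G).map e.toMonoidHom :=
        map_mono (map_solvableRadical_le _ e.symm.surjective)

instance (G : Type) [Group G] : (solvableRadical G).Characteristic :=
  characteristic_iff_map_eq.mpr fun e => map_solvableRadical e

theorem isSolvable_solvableRadical [Finite G] : Group.IsSolvable (solvableRadical G) := by
  have hsup : SupClosed {A : Subgroup G | A.Normal ∧ Group.IsSolvable A} :=
    fun A ⟨_, hsA⟩ B ⟨_, hsB⟩ =>
      have : Group.IsSolvable A := hsA
      have : Group.IsSolvable B := hsB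
      ⟨inferInstance, isSolvable_sup A B⟩
  have hbot : Group.IsSolvable (⊥ : Subgroup G) := inferInstance
  exact (hsup.sSup_mem (Set.toFinite _) ⟨normal_bot, hbot⟩ subset_rfl).2

theorem le_map_subtype_solvableRadical {A N : Subgroup G} [A.Normal] [Group.IsSolvable A]
    (h : A ≤ N) : A ≤ (solvableRadical N).map N.subtype := by
  have : Group.IsSolvable (A.subgroupOf N) :=
    Group.isSolvable_of_surjective (f := (subgroupOfEquivOfLe h).symm.toMonoidHom)
      (MulEquiv.surjective _)
  calc A = (A.subgroupOf N).map N.subtype := (map_subgroupOf_eq_of_le h).symm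
    _ ≤ (solvableRadical N).map N.subtype := map_mono le_solvableRadical

theorem map_subtype_solvableRadical_le [Finite G] (N : Subgroup G) [N.Normal] :
    (solvableRadical N).map N.subtype ≤ solvableRadical G := by
  have := isSolvable_solvableRadical (G := N)
  have : Group.IsSolvable ((solvableRadical N).map N.subtype) :=
    Group.isSolvable_of_surjective (MonoidHom.subgroupMap_surjective _ _)
  exact le_solvableRadical

theorem center_eq_bot_of_solvableRadical_eq_bot (h : solvableRadical G = ⊥) : center G = ⊥ := by
  have : Group.IsSolvable (center G) :=
    Group.isSolvable_of_comm fun a b => Subtype.ext (mem_center_iff.mp b.2 a)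
  exact le_bot_iff.mp (h ▸ le_solvableRadical)

theorem map_subtype_solvableRadical_le_ker {L : Type} [Group L] (π : G →* L) (H : Subgroup G)
    (h : solvableRadical (H.map π) = ⊥) : (solvableRadical H).map H.subtype ≤ π.ker := by
  have hle := map_solvableRadical_le _ (π.subgroupMap_surjective H)
  rw [h, le_bot_iff, Subgroup.map_eq_bot_iff, ker_subgroupMap] at hle
  exact map_le_iff_le_comap.mpr hle

theorem map_subtype_solvableRadical_eq_of_le [Finite G] {N1 N2 : Subgroup G} [N2.Normal]
    (φ : N1 ≃* N2) (h : (solvableRadical N2).map N2.subtype ≤ N1) :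
    (solvableRadical N1).map N1.subtype = (solvableRadical N2).map N2.subtype := by
  have := isSolvable_solvableRadical (G := N2)
  have : Group.IsSolvable ((solvableRadical N2).map N2.subtype) :=
    Group.isSolvable_of_surjective (MonoidHom.subgroupMap_surjective _ _)
  refine (eq_of_le_of_card_ge (le_map_subtype_solvableRadical h) ?_).symm
  rw [card_map_of_injective N1.subtype_injective, card_map_of_injective N2.subtype_injective,
    ← map_solvableRadical φ, card_map_of_injective φ.injective]

end SolvableRadical

section Components

variable {G G' : Type} [Group G] [Group G']

namespace Subgroup

/-- Nonabelian is expressed as `¬ IsSolvable`, which is equivalent for simple groups. -/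
structure IsSimpleComponent (Q : Subgroup G) : Prop where
  isSubnormal : Q.IsSubnormal
  isSimpleGroup : IsSimpleGroup Q
  not_isSolvable : ¬ Group.IsSolvable Q

namespace IsSimpleComponent

variable {Q : Subgroup G}

theorem of_mulEquiv {Q' : Subgroup G'} (hQ : Q.IsSimpleComponent) (hQ' : Q'.IsSubnormal)
    (e : Q ≃* Q') : Q'.IsSimpleComponent where
  isSubnormal := hQ'
  isSimpleGroup := have := hQ.isSimpleGroup; e.symm.isSimpleGroup
  not_isSolvable _ := hQ.not_isSolvable (Group.isSolvable_of_isSolvable_injective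
    (f := e.toMonoidHom) e.injective)

theorem map_equiv (hQ : Q.IsSimpleComponent) (e : G ≃* G') :
    (Q.map e.toMonoidHom).IsSimpleComponent :=
  hQ.of_mulEquiv (hQ.isSubnormal.map e.surjective) (Q.equivMapOfInjective _ e.injective)

theorem smul (hQ : Q.IsSimpleComponent) (a : MulAut G) : (a • Q).IsSimpleComponent :=
  hQ.of_mulEquiv (hQ.isSubnormal.smul a) (equivSMul a Q)

theorem subgroupOf (hQ : Q.IsSimpleComponent) {K : Subgroup G} (h : Q ≤ K) :
    (Q.subgroupOf K).IsSimpleComponent :=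
  hQ.of_mulEquiv hQ.isSubnormal.subgroupOf (subgroupOfEquivOfLe h).symm

theorem map_subtype {N : Subgroup G} [hN : N.Normal] {Q : Subgroup N}
    (hQ : Q.IsSimpleComponent) : (Q.map N.subtype).IsSimpleComponent :=
  hQ.of_mulEquiv (hQ.isSubnormal.trans' hN.isSubnormal)
    (Q.equivMapOfInjective _ N.subtype_injective)

theorem ne_bot (hQ : Q.IsSimpleComponent) : Q ≠ ⊥ :=
  (nontrivial_iff_ne_bot Q).mp hQ.isSimpleGroup.toNontrivial

theorem inf_centralizer_eq_bot (hQ : Q.IsSimpleComponent) : Q ⊓ centralizer Q = ⊥ := by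
  have := hQ.isSimpleGroup
  refine inf_centralizer_eq_bot_of_center_eq_bot
    ((inferInstance : (center Q).Normal).eq_bot_or_eq_top.resolve_right fun h => ?_)
  exact hQ.not_isSolvable
    (Group.isSolvable_of_comm fun a b => mem_center_iff.mp (h ▸ mem_top b) a)

theorem le_commutator_self (hQ : Q.IsSimpleComponent) : Q ≤ ⁅Q, Q⁆ := by
  have := hQ.isSimpleGroup
  have htop : _root_.commutator Q = ⊤ :=
    (inferInstance : (_root_.commutator Q).Normal).eq_bot_or_eq_top.resolve_left
    fun h => hQ.not_isSolvable ⟨1, by rw [derivedSeries_one, h]⟩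
  rw [← map_subtype_commutator, htop, ← MonoidHom.range_eq_map, range_subtype]

theorem le_or_commutator_eq_bot_of_normal (hQ : Q.IsSimpleComponent) {N : Subgroup G}
    (hN : N.Normal) : Q ≤ N ∨ ⁅Q, N⁆ = ⊥ := by
  refine or_iff_not_imp_left.mpr fun hQN => ?_
  obtain ⟨n, f, hf, hnorm, hf0, hfn⟩ := hQ.isSubnormal.exists_chain
  -- Going up the series `Q = f 0 ⊴ ⋯ ⊴ f n = ⊤`: `⁅Q, N ⊓ f (i + 1)⁆ ≤ N ⊓ f i`, and the three
  -- subgroups lemma together with `Q = ⁅Q, Q⁆` turns `⁅Q, N ⊓ f i⁆ = ⊥` into the next step.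
  suffices h : ∀ i, ⁅Q, N ⊓ f i⁆ = ⊥ by simpa [hfn] using h n
  intro i
  induction i with
  | zero =>
    have := hQ.isSimpleGroup
    rw [hf0]
    rcases (hN.subgroupOf Q).eq_bot_or_eq_top with h | h
    · rw [subgroupOf_eq_bot, disjoint_iff] at h
      rw [h, commutator_bot_right]
    · exact absurd (subgroupOf_eq_top.mp h) hQN
  | succ i ih =>
    have hQi : Q ≤ f i := hf0 ▸ hf (Nat.zero_le i)
    have hconj := (normal_subgroupOf_iff (hf i.le_succ)).mp (hnorm i)
    have hle : ⁅Q, N ⊓ f (i + 1)⁆ ≤ N ⊓ f i := by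
      refine commutator_le.mpr fun q hq x hx => ⟨?_, ?_⟩
      · rw [commutatorElement_def]
        exact N.mul_mem (hN.conj_mem x hx.1 q) (N.inv_mem hx.1)
      · rw [commutatorElement_def, mul_assoc, mul_assoc, ← mul_assoc x]
        exact (f i).mul_mem (hQi hq) (hconj _ _ ((f i).inv_mem (hQi hq)) hx.2)
    have h1 : ⁅⁅Q, N ⊓ f (i + 1)⁆, Q⁆ = ⊥ :=
      le_bot_iff.mp ((commutator_mono hle le_rfl).trans (by rw [commutator_comm, ih]))
    have h2 : ⁅⁅N ⊓ f (i + 1), Q⁆, Q⁆ = ⊥ := by rwa [commutator_comm (N ⊓ f (i + 1))]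
    exact le_bot_iff.mp ((commutator_mono hQ.le_commutator_self le_rfl).trans
      (commutator_commutator_eq_bot_of_rotate h1 h2).le)

theorem le_or_commutator_eq_bot (hQ : Q.IsSimpleComponent) {H : Subgroup G}
    (hH : H.IsSubnormal) : Q ≤ H ∨ ⁅Q, H⁆ = ⊥ := by
  induction hH with
  | top => exact Or.inl le_top
  | step H K hHK _ hHn ih =>
    rcases ih with hQK | hQK
    · refine ((hQ.subgroupOf hQK).le_or_commutator_eq_bot_of_normal hHn).imp (fun h => ?_)
        (fun h => ?_)
      · simpa only [map_subgroupOf_eq_of_le hQK, map_subgroupOf_eq_of_le hHK] using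
          map_mono (f := K.subtype) h
      · simpa only [map_commutator, map_subgroupOf_eq_of_le hQK, map_subgroupOf_eq_of_le hHK,
          map_bot] using congrArg (map K.subtype) h
    · exact Or.inr (le_bot_iff.mp (hQK ▸ commutator_mono le_rfl hHK))

theorem commutator_eq_bot_of_ne (hQ : Q.IsSimpleComponent) {Q' : Subgroup G}
    (hQ' : Q'.IsSimpleComponent) (hne : Q ≠ Q') : ⁅Q, Q'⁆ = ⊥ := by
  refine (hQ.le_or_commutator_eq_bot hQ'.isSubnormal).resolve_left fun hle => ?_
  rcases hQ.isSubnormal.subgroupOf.eq_bot_or_top_of_isSimpleGroup hQ'.isSimpleGroup with h | h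
  · rw [subgroupOf_eq_bot, disjoint_iff, inf_eq_left.mpr hle] at h
    exact hQ.ne_bot h
  · exact hne (le_antisymm hle (subgroupOf_eq_top.mp h))

end IsSimpleComponent

theorem nonempty_pi_mulEquiv_iSup_of_isSimpleComponent {ι : Type} [Finite ι]
    {H : ι → Subgroup G} (hinj : Function.Injective H) (hH : ∀ i, (H i).IsSimpleComponent) :
    Nonempty ((∀ i, H i) ≃* ↥(⨆ i, H i)) := by
  have hcent : ∀ i j, i ≠ j → H j ≤ centralizer (H i) := fun i j hij =>
    commutator_eq_bot_iff_le_centralizer.mp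
      ((hH j).commutator_eq_bot_of_ne (hH i) (hinj.ne hij.symm))
  refine Subgroup.nonempty_pi_mulEquiv_iSup
    (fun i j hij x y hx hy => mem_centralizer_iff.mp (hcent i j hij hy) x hx) ?_
  refine iSupIndep_def.mpr fun i => disjoint_iff.mpr (le_bot_iff.mp ?_)
  rw [← (hH i).inf_centralizer_eq_bot]
  exact inf_le_inf_left _ (iSup₂_le fun j hj => hcent i j hj.symm)

theorem exists_isSimpleComponent [Finite G] [Nontrivial G] (h : solvableRadical G = ⊥) :
    ∃ Q : Subgroup G, Q.IsSimpleComponent := by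
  have htop : solvableRadical (⊤ : Subgroup G) = ⊥ :=
    (map_eq_bot_iff_of_injective _ (f := (topEquiv (G := G)).toMonoidHom) topEquiv.injective).mp
      ((map_solvableRadical topEquiv).trans h)
  obtain ⟨Q, ⟨hQne, hQsn, hQrad⟩, hmin⟩ := (Set.toFinite {Q : Subgroup G |
    Q ≠ ⊥ ∧ Q.IsSubnormal ∧ solvableRadical Q = ⊥}).exists_minimal ⟨⊤, top_ne_bot, .top, htop⟩
  have : Nontrivial Q := (nontrivial_iff_ne_bot Q).mpr hQne
  refine ⟨Q, hQsn, ⟨fun H hH => or_iff_not_imp_left.mpr fun hHne => ?_⟩, fun hs => ?_⟩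
  · -- `H` lies in the family again (its radical is normal in `Q`), so minimality gives `H = Q`
    have hHrad : solvableRadical H = ⊥ := by
      have := map_subtype_solvableRadical_le H
      rwa [hQrad, le_bot_iff, map_eq_bot_iff_of_injective _ H.subtype_injective] at this
    have hmap := hmin ⟨(map_eq_bot_iff_of_injective _ Q.subtype_injective).not.mpr hHne,
        hH.isSubnormal.trans' hQsn,
        by rw [← map_solvableRadical (H.equivMapOfInjective _ Q.subtype_injective), hHrad,
          map_bot]⟩ (map_subtype_le H)
    exact eq_top_iff.mpr fun x _ => by
      obtain ⟨y, hy, hyx⟩ := hmap x.2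
      rwa [← Subtype.ext hyx]
  · have := hs
    exact top_ne_bot (le_bot_iff.mp (hQrad ▸ le_solvableRadical : (⊤ : Subgroup Q) ≤ ⊥))

variable (G) in
def simpleLayer : Subgroup G := sSup {Q | Q.IsSimpleComponent}

theorem IsSimpleComponent.le_simpleLayer {Q : Subgroup G} (hQ : Q.IsSimpleComponent) :
    Q ≤ simpleLayer G :=
  le_sSup hQ

theorem map_simpleLayer (e : G ≃* G') : (simpleLayer G).map e.toMonoidHom = simpleLayer G' :=
  map_sSup_eq_of_forall (fun _ hQ => hQ.map_equiv e) fun Q hQ =>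
    ⟨Q.map e.symm.toMonoidHom, hQ.map_equiv e.symm, (e.mapSubgroup.apply_symm_apply Q).ge⟩

instance (G : Type) [Group G] : (simpleLayer G).Characteristic :=
  characteristic_iff_map_eq.mpr fun e => map_simpleLayer e

def componentsIn (N : Subgroup G) : Set (Subgroup G) := {Q | Q.IsSimpleComponent ∧ Q ≤ N}

theorem map_subtype_simpleLayer (N : Subgroup G) [N.Normal] :
    (simpleLayer N).map N.subtype = sSup (componentsIn N) :=
  map_sSup_eq_of_forall (fun _ hQ => ⟨hQ.map_subtype, map_subtype_le _⟩) fun Q ⟨hQ, hle⟩ =>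
    ⟨Q.subgroupOf N, hQ.subgroupOf hle, (map_subgroupOf_eq_of_le hle).ge⟩

theorem conj_smul_mem_componentsIn_iff {N : Subgroup G} [N.Normal] (g : G) {Q : Subgroup G} :
    MulAut.conj g • Q ∈ componentsIn N ↔ Q ∈ componentsIn N := by
  have key : ∀ (a : MulAut G) (Q : Subgroup G), a • N = N → Q ∈ componentsIn N →
      a • Q ∈ componentsIn N := fun a Q ha ⟨hQ, hle⟩ =>
    ⟨hQ.smul a, ha ▸ pointwise_smul_le_pointwise_smul_iff.mpr hle⟩
  refine ⟨fun h => ?_, key _ Q (Normal.conj_smul_eq_self g N)⟩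
  simpa using key (MulAut.conj g)⁻¹ _
    (inv_smul_eq_iff.mpr (Normal.conj_smul_eq_self g N).symm) h

theorem exists_equiv_componentsIn {N1 N2 : Subgroup G} [N1.Normal] [N2.Normal] (φ : N1 ≃* N2) :
    ∃ τ : componentsIn N1 ≃ componentsIn N2,
      ∀ Q, Nonempty (↥(τ Q : Subgroup G) ≃* ↥(Q : Subgroup G)) := by
  let c (N : Subgroup G) [N.Normal] : componentsIn N ≃ {Q : Subgroup N // Q.IsSimpleComponent} :=
    { toFun := fun Q => ⟨Q.1.subgroupOf N, Q.2.1.subgroupOf Q.2.2⟩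
      invFun := fun Q => ⟨Q.1.map N.subtype, Q.2.map_subtype, map_subtype_le _⟩
      left_inv := fun Q => Subtype.ext (map_subgroupOf_eq_of_le Q.2.2)
      right_inv := fun Q => Subtype.ext (comap_map_eq_self_of_injective N.subtype_injective Q.1) }
  let m : {Q : Subgroup N1 // Q.IsSimpleComponent} ≃ {Q : Subgroup N2 // Q.IsSimpleComponent} :=
    φ.mapSubgroup.toEquiv.subtypeEquiv fun Q =>
      ⟨fun hQ => hQ.map_equiv φ, fun hQ => φ.mapSubgroup.symm_apply_apply Q ▸ hQ.map_equiv φ.symm⟩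
  refine ⟨(c N1).trans (m.trans (c N2).symm), fun Q => ⟨?_⟩⟩
  exact ((equivMapOfInjective _ _ N2.subtype_injective).symm.trans
    (equivMapOfInjective _ _ φ.injective).symm).trans (subgroupOfEquivOfLe Q.2.2)

theorem nonempty_mulEquiv_sSup_of_equiv {S T : Set (Subgroup G)} [Finite S]
    (hS : ∀ Q ∈ S, Q.IsSimpleComponent) (hT : ∀ Q ∈ T, Q.IsSimpleComponent) (f : S ≃ T)
    (hf : ∀ Q, Nonempty (↥(f Q : Subgroup G) ≃* ↥(Q : Subgroup G))) :
    Nonempty (↥(sSup S) ≃* ↥(sSup T)) := by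
  obtain ⟨eS⟩ := nonempty_pi_mulEquiv_iSup_of_isSimpleComponent
    (H := fun Q : S => (Q : Subgroup G)) Subtype.val_injective fun Q => hS Q Q.2
  obtain ⟨eT⟩ := nonempty_pi_mulEquiv_iSup_of_isSimpleComponent
    (H := fun Q : S => (f Q : Subgroup G)) (Subtype.val_injective.comp f.injective)
    fun Q => hT _ (f Q).2
  rw [sSup_eq_iSup', sSup_eq_iSup', ← f.iSup_comp]
  exact ⟨eS.symm.trans ((MulEquiv.piCongrRight fun Q => (hf Q).some.symm).trans eT)⟩

theorem normal_sSup_componentsIn_diff (N N' : Subgroup G) [N.Normal] [N'.Normal] :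
    (sSup (componentsIn N \ componentsIn N')).Normal :=
  normal_sSup_of_forall_conj_smul_mem fun g _ ⟨h, h'⟩ =>
    ⟨(conj_smul_mem_componentsIn_iff g).mpr h, mt (conj_smul_mem_componentsIn_iff g).mp h'⟩

theorem sSup_componentsIn_diff_le_centralizer (N : Subgroup G) {N' : Subgroup G}
    [hN' : N'.Normal] :
    sSup (componentsIn N \ componentsIn N') ≤ centralizer N' :=
  sSup_le fun _ ⟨⟨hQ, _⟩, hQ'⟩ => commutator_eq_bot_iff_le_centralizer.mp
    ((hQ.le_or_commutator_eq_bot_of_normal hN').resolve_left fun h => hQ' ⟨hQ, h⟩)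

theorem sSup_componentsIn_diff_inf_eq_bot (N : Subgroup G) {N' : Subgroup G} [N'.Normal]
    (h : solvableRadical N' = ⊥) : sSup (componentsIn N \ componentsIn N') ⊓ N' = ⊥ :=
  le_bot_iff.mp <| calc
    _ ≤ N' ⊓ centralizer N' :=
      le_inf inf_le_right (inf_le_left.trans (sSup_componentsIn_diff_le_centralizer N))
    _ = ⊥ := inf_centralizer_eq_bot_of_center_eq_bot (center_eq_bot_of_solvableRadical_eq_bot h)

end Subgroup

end Components

section Compatibility

open Subgroup

def CompatibleVia (G L1 L2 : Type) [Group G] [Group L1] [Group L2] : Prop :=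
  ∃ (π1 : G →* L1) (π2 : G →* L2), Function.Surjective π1 ∧ Function.Surjective π2 ∧
    Nonempty (π1.ker ≃* π2.ker)

def HasCompatibleQuotients (L1 L2 : Type) [Group L1] [Group L2] : Prop :=
  ∃ (M1 : Subgroup L1) (M2 : Subgroup L2) (h1 : M1.Normal) (h2 : M2.Normal),
    M1 ≠ ⊥ ∧ M2 ≠ ⊥ ∧ Nonempty (↥M1 ≃* ↥M2) ∧
      (letI := h1; letI := h2; Compatible (L1 ⧸ M1) (L2 ⧸ M2))

variable {G L1 L2 : Type} [Group G] [Group L1] [Group L2]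

theorem CompatibleVia.compatible [Finite G] (h : CompatibleVia G L1 L2) : Compatible L1 L2 := by
  obtain ⟨π1, π2, h1, h2, hφ⟩ := h
  exact ⟨G, inferInstance, inferInstance, π1.ker, π2.ker, inferInstance, inferInstance, hφ,
    ⟨QuotientGroup.quotientKerEquivOfSurjective π1 h1⟩,
    ⟨QuotientGroup.quotientKerEquivOfSurjective π2 h2⟩⟩

theorem Compatible.exists_compatibleVia (h : Compatible L1 L2) :
    ∃ (G : Type) (_ : Group G) (_ : Finite G), CompatibleVia G L1 L2 := by
  obtain ⟨G, _, _, N1, N2, _, _, hφ, ⟨e1⟩, ⟨e2⟩⟩ := h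
  refine ⟨G, _, ‹_›, (e1 : G ⧸ N1 →* L1).comp (QuotientGroup.mk' N1),
    (e2 : G ⧸ N2 →* L2).comp (QuotientGroup.mk' N2),
    e1.surjective.comp (QuotientGroup.mk'_surjective _),
    e2.surjective.comp (QuotientGroup.mk'_surjective _), ?_⟩
  rwa [MonoidHom.ker_mulEquiv_comp, MonoidHom.ker_mulEquiv_comp, QuotientGroup.ker_mk',
    QuotientGroup.ker_mk']

theorem compatible_of_subsingleton [Subsingleton L1] [Subsingleton L2] : Compatible L1 L2 := by
  refine CompatibleVia.compatible (G := Unit) ⟨1, 1, fun _ => ⟨(), Subsingleton.elim _ _⟩,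
    fun _ => ⟨(), Subsingleton.elim _ _⟩, ?_⟩
  rw [MonoidHom.ker_one, MonoidHom.ker_one]
  exact ⟨.refl _⟩

theorem hasCompatibleQuotients_of_mulEquiv [Nontrivial L1] (e : L1 ≃* L2) :
    HasCompatibleQuotients L1 L2 := by
  have : Nontrivial L2 := e.symm.toEquiv.nontrivial
  have := QuotientGroup.subsingleton_quotient_top (G := L1)
  have := QuotientGroup.subsingleton_quotient_top (G := L2)
  exact ⟨⊤, ⊤, normal_top, normal_top, top_ne_bot, top_ne_bot,
    ⟨(topEquiv.trans e).trans topEquiv.symm⟩, compatible_of_subsingleton⟩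

section Surjections

variable {π1 : G →* L1} {π2 : G →* L2}

theorem compatibleVia_ker (h1 : Function.Surjective π1) (h2 : Function.Surjective π2)
    (φ : π1.ker ≃* π2.ker) (htop : π1.ker ⊔ π2.ker = ⊤) : CompatibleVia π1.ker L1 L2 := by
  refine ⟨(π1.comp π2.ker.subtype).comp φ.toMonoidHom, π2.comp π1.ker.subtype,
    (π1.surjective_comp_subtype h1 (sup_comm π1.ker _ ▸ htop)).comp φ.surjective,
    π2.surjective_comp_subtype h2 htop, ?_⟩
  rw [← MonoidHom.comap_ker, ← MonoidHom.comap_ker, ← MonoidHom.comap_ker,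
    comap_equiv_eq_map_symm']
  obtain ⟨ψ⟩ := nonempty_subgroupOf_mulEquiv π1.ker π2.ker
  exact ⟨(equivMapOfInjective _ _ φ.symm.injective).symm.trans ψ⟩

theorem compatibleVia_quotient (h1 : Function.Surjective π1) (h2 : Function.Surjective π2)
    (φ : π1.ker ≃* π2.ker) {A : Subgroup π1.ker} {B : Subgroup π2.ker}
    (hAB : A.map φ.toMonoidHom = B) (hC : A.map π1.ker.subtype = B.map π2.ker.subtype)
    [(A.map π1.ker.subtype).Normal] : CompatibleVia (G ⧸ A.map π1.ker.subtype) L1 L2 := by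
  set C := A.map π1.ker.subtype
  have hC2 : C ≤ π2.ker := hC ▸ map_subtype_le B
  refine ⟨QuotientGroup.lift C π1 (map_subtype_le A), QuotientGroup.lift C π2 hC2,
    QuotientGroup.lift_surjective_of_surjective _ _ h1 _,
    QuotientGroup.lift_surjective_of_surjective _ _ h2 _, ?_⟩
  rw [QuotientGroup.ker_lift, QuotientGroup.ker_lift]
  have hA : C.subgroupOf π1.ker = A := comap_map_eq_self_of_injective π1.ker.subtype_injective A
  have hB : C.subgroupOf π2.ker = B := by
    rw [hC]; exact comap_map_eq_self_of_injective π2.ker.subtype_injective B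
  have hker : ((QuotientGroup.mk' C).subgroupMap π1.ker).ker.map φ.toMonoidHom =
      ((QuotientGroup.mk' C).subgroupMap π2.ker).ker := by
    rw [ker_subgroupMap, ker_subgroupMap, QuotientGroup.ker_mk', hA, hB, hAB]
  exact ⟨(QuotientGroup.quotientKerEquivOfSurjective _
      ((QuotientGroup.mk' C).subgroupMap_surjective π1.ker)).symm.trans <|
    (QuotientGroup.congr _ _ φ hker).trans <| QuotientGroup.quotientKerEquivOfSurjective _
      ((QuotientGroup.mk' C).subgroupMap_surjective π2.ker)⟩

theorem compatible_map_ker_s18 [Finite G] (φ : π1.ker ≃* π2.ker) :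
    Compatible ↥(π2.ker.map π1) ↥(π1.ker.map π2) := by
  set S := π1.ker ⊔ π2.ker
  have hmem1 : ∀ x : S, (π1.comp S.subtype) x ∈ π2.ker.map π1 := fun x => by
    rw [← map_sup_ker, sup_comm]; exact mem_map_of_mem π1 x.2
  have hmem2 : ∀ x : S, (π2.comp S.subtype) x ∈ π1.ker.map π2 := fun x => by
    rw [← map_sup_ker]; exact mem_map_of_mem π2 x.2
  refine CompatibleVia.compatible (G := S) ⟨(π1.comp S.subtype).codRestrict _ hmem1,
    (π2.comp S.subtype).codRestrict _ hmem2, ?_, ?_, ?_⟩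
  · rintro ⟨_, n, hn, rfl⟩
    exact ⟨⟨n, mem_sup_right hn⟩, rfl⟩
  · rintro ⟨_, n, hn, rfl⟩
    exact ⟨⟨n, mem_sup_left hn⟩, rfl⟩
  · rw [MonoidHom.ker_codRestrict, MonoidHom.ker_codRestrict, ← MonoidHom.comap_ker,
      ← MonoidHom.comap_ker]
    exact ⟨(subgroupOfEquivOfLe le_sup_left).trans
      (φ.trans (subgroupOfEquivOfLe le_sup_right).symm)⟩

theorem nonempty_quotient_sup_ker_mulEquiv (h1 : Function.Surjective π1) (H : Subgroup G)
    [H.Normal] [(H.map π1).Normal] :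
    Nonempty (G ⧸ (H ⊔ π1.ker) ≃* L1 ⧸ H.map π1) :=
  ⟨(QuotientGroup.quotientMulEquivOfEq (π1.ker_mk'_comp H).symm).trans <|
    QuotientGroup.quotientKerEquivOfSurjective _ ((QuotientGroup.mk'_surjective _).comp h1)⟩

theorem isSimsPair_map_ker [Finite G] (h1 : Function.Surjective π1) (h2 : Function.Surjective π2)
    (φ : π1.ker ≃* π2.ker) (hne : π1.ker ⊔ π2.ker ≠ ⊤) :
    IsSimsPair L1 L2 (π2.ker.map π1) (π1.ker.map π2) := by
  have hK1 : (π2.ker.map π1).Normal := .map inferInstance π1 h1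
  have hK2 : (π1.ker.map π2).Normal := .map inferInstance π2 h2
  obtain ⟨q1⟩ := nonempty_quotient_sup_ker_mulEquiv h1 π2.ker
  obtain ⟨q2⟩ := nonempty_quotient_sup_ker_mulEquiv h2 π1.ker
  have : Nontrivial (G ⧸ (π2.ker ⊔ π1.ker)) :=
    QuotientGroup.nontrivial_iff.mpr (sup_comm π1.ker _ ▸ hne)
  exact ⟨hK1, hK2, compatible_map_ker_s18 φ,
    ⟨q1.symm.trans ((QuotientGroup.quotientMulEquivOfEq (sup_comm _ _)).trans q2)⟩,
    q1.symm.toEquiv.nontrivial⟩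

theorem map_subtype_solvableRadical_ker_eq [Finite G] (φ : π1.ker ≃* π2.ker)
    (hrad : solvableRadical (π2.ker.map π1) = ⊥ ∨ solvableRadical (π1.ker.map π2) = ⊥) :
    (solvableRadical π1.ker).map π1.ker.subtype = (solvableRadical π2.ker).map π2.ker.subtype := by
  rcases hrad with h | h
  · exact map_subtype_solvableRadical_eq_of_le φ (map_subtype_solvableRadical_le_ker π1 _ h)
  · exact (map_subtype_solvableRadical_eq_of_le φ.symm
      (map_subtype_solvableRadical_le_ker π2 _ h)).symm

theorem hasCompatibleQuotients_of_centralizing [Finite G] (h1 : Function.Surjective π1)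
    (h2 : Function.Surjective π2) (φ : π1.ker ≃* π2.ker) {E1 E2 : Subgroup G} [E1.Normal]
    [E2.Normal] (hc1 : E1 ≤ centralizer π2.ker) (hc2 : E2 ≤ centralizer π1.ker)
    (hd1 : E1 ⊓ π2.ker = ⊥) (hd2 : E2 ⊓ π1.ker = ⊥) (e : E1 ≃* E2) (hE : E1 ≠ ⊥) :
    HasCompatibleQuotients L1 L2 := by
  obtain ⟨f1⟩ := nonempty_mulEquiv_map_of_disjoint_ker π1 hd2
  obtain ⟨f2⟩ := nonempty_mulEquiv_map_of_disjoint_ker π2 hd1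
  obtain ⟨p1⟩ := nonempty_sup_mulEquiv_prod hc2 hd2
  obtain ⟨p2⟩ := nonempty_sup_mulEquiv_prod hc1 hd1
  have hM1 : (E2.map π1).Normal := .map inferInstance π1 h1
  have hM2 : (E1.map π2).Normal := .map inferInstance π2 h2
  refine ⟨E2.map π1, E1.map π2, hM1, hM2, ?_, ?_, ⟨f1.symm.trans (e.symm.trans f2)⟩, ?_⟩
  · rwa [Ne, ← card_eq_one, ← Nat.card_congr f1.toEquiv, ← Nat.card_congr e.toEquiv, card_eq_one]
  · rwa [Ne, ← card_eq_one, ← Nat.card_congr f2.toEquiv, card_eq_one]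
  · refine CompatibleVia.compatible ⟨(QuotientGroup.mk' _).comp π1, (QuotientGroup.mk' _).comp π2,
      (QuotientGroup.mk'_surjective _).comp h1, (QuotientGroup.mk'_surjective _).comp h2, ?_⟩
    rw [π1.ker_mk'_comp, π2.ker_mk'_comp]
    exact ⟨p1.trans ((MulEquiv.prodCongr e.symm φ).trans p2.symm)⟩

theorem hasCompatibleQuotients_or_exists_compatibleVia_quotient [Finite G]
    (h1 : Function.Surjective π1) (h2 : Function.Surjective π2) (φ : π1.ker ≃* π2.ker)
    (hR : solvableRadical π1.ker = ⊥) (hne : π1.ker ≠ ⊥) :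
    HasCompatibleQuotients L1 L2 ∨
      ∃ (C : Subgroup G) (_ : C.Normal), C ≠ ⊥ ∧ CompatibleVia (G ⧸ C) L1 L2 := by
  have hR2 : solvableRadical π2.ker = ⊥ := by rw [← map_solvableRadical φ, hR, Subgroup.map_bot]
  obtain ⟨τ, hτ⟩ := exists_equiv_componentsIn φ
  by_cases hsub : componentsIn π1.ker ⊆ componentsIn π2.ker
  · have hS : componentsIn π1.ker = componentsIn π2.ker :=
      Set.eq_of_subset_of_ncard_le hsub (Nat.card_congr τ).ge
    have : Nontrivial π1.ker := (nontrivial_iff_ne_bot _).mpr hne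
    obtain ⟨Q, hQ⟩ := exists_isSimpleComponent hR
    refine Or.inr ⟨(simpleLayer π1.ker).map π1.ker.subtype, inferInstance,
      (map_eq_bot_iff_of_injective _ π1.ker.subtype_injective).not.mpr
        (ne_bot_of_le_ne_bot hQ.ne_bot hQ.le_simpleLayer),
      compatibleVia_quotient h1 h2 φ (map_simpleLayer φ) ?_⟩
    rw [map_subtype_simpleLayer, map_subtype_simpleLayer, hS]
  · obtain ⟨Q, hQ1, hQ2⟩ := Set.not_subset.mp hsub
    obtain ⟨f, hf⟩ := exists_equiv_diff_of_equiv (r := fun A B : Subgroup G => Nonempty (A ≃* B))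
      ⟨fun _ => ⟨.refl _⟩, fun ⟨e⟩ => ⟨e.symm⟩, fun ⟨e⟩ ⟨e'⟩ => ⟨e.trans e'⟩⟩ (Set.toFinite _) τ hτ
    obtain ⟨e⟩ := nonempty_mulEquiv_sSup_of_equiv (fun Q hQ => hQ.1.1) (fun Q hQ => hQ.1.1) f hf
    have := normal_sSup_componentsIn_diff π1.ker π2.ker
    have := normal_sSup_componentsIn_diff π2.ker π1.ker
    exact Or.inl (hasCompatibleQuotients_of_centralizing h1 h2 φ
      (sSup_componentsIn_diff_le_centralizer _) (sSup_componentsIn_diff_le_centralizer _)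
      (sSup_componentsIn_diff_inf_eq_bot _ hR2) (sSup_componentsIn_diff_inf_eq_bot _ hR) e
      (ne_bot_of_le_ne_bot hQ1.1.ne_bot (le_sSup ⟨hQ1, hQ2⟩)))

end Surjections

end Compatibility

theorem HasCompatibleQuotients.of_compatibleVia {L1 L2 : Type} [Group L1] [Group L2]
    [Nontrivial L1] (hrad : ∀ (K1 : Subgroup L1) (K2 : Subgroup L2), IsSimsPair L1 L2 K1 K2 →
      solvableRadical K1 = ⊥ ∨ solvableRadical K2 = ⊥)
    {G : Type} [Group G] [Finite G] (h : CompatibleVia G L1 L2) : HasCompatibleQuotients L1 L2 := by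
  induction hn : Nat.card G using Nat.strong_induction_on generalizing G with
  | _ n ih =>
  subst hn
  have descend : ∀ (G' : Type) [Group G'] [Finite G'], Nat.card G' < Nat.card G →
      CompatibleVia G' L1 L2 → HasCompatibleQuotients L1 L2 := fun G' _ _ hlt h' => ih _ hlt h' rfl
  obtain ⟨π1, π2, h1, h2, ⟨φ⟩⟩ := h
  by_cases heq : π1.ker = π2.ker
  · exact hasCompatibleQuotients_of_mulEquiv
      ((QuotientGroup.quotientKerEquivOfSurjective π1 h1).symm.trans
        ((QuotientGroup.quotientMulEquivOfEq heq).trans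
          (QuotientGroup.quotientKerEquivOfSurjective π2 h2)))
  have hcard : Nat.card π2.ker = Nat.card π1.ker := (Nat.card_congr φ.toEquiv).symm
  by_cases htop : π1.ker ⊔ π2.ker = ⊤
  · have hN1 : π1.ker ≠ ⊤ := fun h =>
      heq (h.trans ((Subgroup.card_eq_iff_eq_top _).mp (by rw [hcard, h, Subgroup.card_top])).symm)
    exact descend _ (Subgroup.card_lt_card_of_ne_top hN1) (compatibleVia_ker h1 h2 φ htop)
  have hR := map_subtype_solvableRadical_ker_eq φ (hrad _ _ (isSimsPair_map_ker h1 h2 φ htop))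
  by_cases hR1 : solvableRadical π1.ker = ⊥
  · have hN1 : π1.ker ≠ ⊥ := fun h =>
      heq (h.trans (Subgroup.card_eq_one.mp (by rw [hcard, h, Subgroup.card_bot])).symm)
    obtain h | ⟨C, _, hC, h⟩ :=
      hasCompatibleQuotients_or_exists_compatibleVia_quotient h1 h2 φ hR1 hN1
    exacts [h, descend _ (Subgroup.card_quotient_lt hC) h]
  · exact descend _ (Subgroup.card_quotient_lt
      ((Subgroup.map_eq_bot_iff_of_injective _ π1.ker.subtype_injective).not.mpr hR1))
      (compatibleVia_quotient h1 h2 φ (map_solvableRadical φ) hR)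

theorem quotients_compatible_of_sims_pairs_trivial_radical_general
    (L1 : Type) [Group L1] [Nontrivial L1]
    (L2 : Type) [Group L2]
    (hcomp : Compatible L1 L2)
    (hrad : ∀ (K1 : Subgroup L1) (K2 : Subgroup L2), IsSimsPair L1 L2 K1 K2 →
      solvableRadical ↥K1 = ⊥ ∨ solvableRadical ↥K2 = ⊥) :
    ∃ (M1 : Subgroup L1) (M2 : Subgroup L2) (h1 : M1.Normal) (h2 : M2.Normal),
      M1 ≠ ⊥ ∧ M2 ≠ ⊥ ∧ Nonempty (↥M1 ≃* ↥M2) ∧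
      (letI := h1; letI := h2; Compatible (L1 ⧸ M1) (L2 ⧸ M2)) := by
  obtain ⟨G, _, _, h⟩ := hcomp.exists_compatibleVia
  exact HasCompatibleQuotients.of_compatibleVia hrad h

/-- Corollary 5.4: if every Sims pair `(K1, K2)` of the nontrivial compatible pair
`(L1, L2)` satisfies `Rad(K1) = 1` or `Rad(K2) = 1`, then there are isomorphic
nontrivial normal subgroups `M1 ⊴ L1`, `M2 ⊴ L2` with `L1 ⧸ M1` and `L2 ⧸ M2`
compatible. -/
theorem quotients_compatible_of_sims_pairs_trivial_radical
    (L1 : Type) [Group L1] [Finite L1] [Nontrivial L1]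
    (L2 : Type) [Group L2] [Finite L2] [Nontrivial L2]
    (hcomp : Compatible L1 L2)
    (hrad : ∀ (K1 : Subgroup L1) (K2 : Subgroup L2), IsSimsPair L1 L2 K1 K2 →
      solvableRadical ↥K1 = ⊥ ∨ solvableRadical ↥K2 = ⊥) :
    ∃ (M1 : Subgroup L1) (M2 : Subgroup L2) (h1 : M1.Normal) (h2 : M2.Normal),
      M1 ≠ ⊥ ∧ M2 ≠ ⊥ ∧ Nonempty (↥M1 ≃* ↥M2) ∧
      (letI := h1; letI := h2; Compatible (L1 ⧸ M1) (L2 ⧸ M2)) :=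
  quotients_compatible_of_sims_pairs_trivial_radical_general L1 L2 hcomp hrad
end
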